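/- arXiv:1701.03774 — 10 statements merged into one kernel-verified Lean document; each statement's English description precedes it below -/
import Mathlib

section
/- Conjecture C2 implies Conjecture C1: if every linear hypergraph with no rank-1 edges in which every vertex has clique degree D(x) ≤ k satisfies q_list ≤ k + 1 (for every k), then every linear hypergraph with n vertices and no rank-1 edges satisfies q_list ≤ n. -/
open Finset

variable {V : Type*} [DecidableEq V]

/-- A proper list edge coloring of the hypergraph with edge set `E` from the lists `L`:
each edge gets a color from its list, and two distinct edges get the same color
only if they are disjoint. -/
def IsProperListColoring (E : Finset (Finset V)) (L : Finset V → Finset ℕ)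
    (γ : Finset V → ℕ) : Prop :=
  (∀ e ∈ E, γ e ∈ L e) ∧ ∀ e ∈ E, ∀ f ∈ E, e ≠ f → γ e = γ f → Disjoint e f

/-- `E` is `k`-list-edge-colorable: for every assignment of lists of size `k`
there is a proper list edge coloring. -/
def ListColorable (E : Finset (Finset V)) (k : ℕ) : Prop :=
  ∀ L : Finset V → Finset ℕ, (∀ e ∈ E, (L e).card = k) →
    ∃ γ : Finset V → ℕ, IsProperListColoring E L γ

/-- The list edge chromatic number `q_list`: the least `k` such that `E` is
`k`-list-edge-colorable. -/
noncomputable def qList (E : Finset (Finset V)) : ℕ :=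
  sInf {k | ListColorable E k}

/-- The degree of a vertex: the number of edges containing it. -/
def deg (E : Finset (Finset V)) (x : V) : ℕ := (E.filter fun e => x ∈ e).card

/-- The clique rank of an edge: `R(e) = ∑_{x ∈ e} (d(x) - 1)`. -/
def cliqueRank (E : Finset (Finset V)) (e : Finset V) : ℕ :=
  ∑ x ∈ e, (deg E x - 1)

/-- The clique degree of a vertex: `D(x) = ∑_{e ∋ x} (r(e) - 1)`. -/
def cliqueDeg (E : Finset (Finset V)) (x : V) : ℕ :=
  ∑ e ∈ E.filter (fun e => x ∈ e), (e.card - 1)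

/-- A hypergraph is linear if any two distinct edges meet in at most one vertex. -/
def Linear (E : Finset (Finset V)) : Prop :=
  ∀ e ∈ E, ∀ f ∈ E, e ≠ f → (e ∩ f).card ≤ 1

/-- The number of triangles with side `e`: unordered pairs `{f, g}` of edges
distinct from `e` such that `e, f, g` pairwise intersect. -/
def numTriangles (E : Finset (Finset V)) (e : Finset V) : ℕ :=
  (((E.erase e).powersetCard 2).filter fun p =>
    (∀ f ∈ p, (e ∩ f).Nonempty) ∧ ∀ f ∈ p, ∀ g ∈ p, f ≠ g → (f ∩ g).Nonempty).card

/-- Conjecture C2 implies Conjecture C1. -/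
theorem stmt3
    (C2 : ∀ (V : Type) [DecidableEq V] [Fintype V] (E : Finset (Finset V)) (k : ℕ),
      Linear E → (∀ e ∈ E, 2 ≤ e.card) → (∀ x : V, cliqueDeg E x ≤ k) →
      qList E ≤ k + 1) :
    ∀ (V : Type) [DecidableEq V] [Fintype V] (E : Finset (Finset V)),
      Linear E → (∀ e ∈ E, 2 ≤ e.card) → qList E ≤ Fintype.card V := by
  intro V _ _ E hlin hr
  by_cases hn : Fintype.card V = 0
  · have hE : E = ∅ := by
      rw [Finset.eq_empty_iff_forall_notMem]
      intro e he
      have h1 := hr e he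
      have h2 : e.card ≤ Fintype.card V := Finset.card_le_univ e
      omega
    subst hE
    have hc : ListColorable (∅ : Finset (Finset V)) 0 := by
      intro L hL
      exact ⟨fun _ => 0, fun e he => absurd he (by simp), fun e he => absurd he (by simp)⟩
    have : qList (∅ : Finset (Finset V)) = 0 := Nat.sInf_eq_zero.mpr (Or.inl hc)
    omega
  · have hk : ∀ x : V, cliqueDeg E x ≤ Fintype.card V - 1 := by
      intro x
      have hdisj : ∀ e ∈ E.filter (fun e => x ∈ e), ∀ f ∈ E.filter (fun e => x ∈ e),
          e ≠ f → Disjoint (e.erase x) (f.erase x) := by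
        intro e he f hf hne
        simp only [Finset.mem_filter] at he hf
        rw [Finset.disjoint_left]
        intro y hy hyf
        have hyx : y ≠ x := Finset.ne_of_mem_erase hy
        have h2 : ({x, y} : Finset V) ⊆ e ∩ f := by
          intro z hz
          simp only [Finset.mem_insert, Finset.mem_singleton] at hz
          rcases hz with rfl | rfl
          · exact Finset.mem_inter.mpr ⟨he.2, hf.2⟩
          · exact Finset.mem_inter.mpr ⟨Finset.mem_of_mem_erase hy, Finset.mem_of_mem_erase hyf⟩
        have h3 := Finset.card_le_card h2
        rw [Finset.card_insert_of_notMem (by simp [Ne.symm hyx]),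
          Finset.card_singleton] at h3
        have h4 := hlin e he.1 f hf.1 hne
        omega
      calc cliqueDeg E x = ∑ e ∈ E.filter (fun e => x ∈ e), (e.erase x).card := by
            apply Finset.sum_congr rfl
            intro e he
            simp only [Finset.mem_filter] at he
            rw [Finset.card_erase_of_mem he.2]
        _ = ((E.filter (fun e => x ∈ e)).biUnion (fun e => e.erase x)).card :=
            (Finset.card_biUnion hdisj).symm
        _ ≤ (Finset.univ.erase x).card := Finset.card_le_card (by
            intro y hy
            simp only [Finset.mem_biUnion] at hy
            obtain ⟨e, _, hye⟩ := hy
            exact Finset.mem_erase.mpr ⟨Finset.ne_of_mem_erase hye, Finset.mem_univ y⟩)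
        _ = Fintype.card V - 1 := by
            rw [Finset.card_erase_of_mem (Finset.mem_univ x), Finset.card_univ]
    have := C2 V E (Fintype.card V - 1) hlin hr hk
    omega
end

section
/- Conjecture C2 implies Conjecture C3: if every linear hypergraph with no rank-1 edges in which every vertex has clique degree D(x) ≤ k satisfies q_list ≤ k + 1 (for every k), then every linear hypergraph with maximum rank P, maximum degree Δ, and no rank-1 edges satisfies q_list ≤ ΔP − max(Δ, P) + 1. -/
open Finset

variable {V : Type*} [DecidableEq V]

lemma greedy (m : ℕ) :
    ∀ E : Finset (Finset V),
      (∀ e ∈ E, ((E.erase e).filter fun f => ¬ Disjoint e f).card ≤ m) →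
      ListColorable E (m + 1) := by
  intro E
  induction E using Finset.strongInduction with
  | _ E ih =>
    intro h L hL
    rcases E.eq_empty_or_nonempty with rfl | ⟨e, he⟩
    · exact ⟨fun _ => 0, by simp, by simp⟩
    · have hsub : E.erase e ⊂ E := Finset.erase_ssubset he
      have h' : ∀ f ∈ E.erase e,
          (((E.erase e).erase f).filter fun g => ¬ Disjoint f g).card ≤ m := by
        intro f hf
        refine le_trans (Finset.card_le_card ?_) (h f (Finset.mem_of_mem_erase hf))
        intro g hg
        simp only [Finset.mem_filter, Finset.mem_erase] at *
        tauto
      obtain ⟨γ, hγ1, hγ2⟩ := ih _ hsub h' L (fun f hf => hL f (Finset.mem_of_mem_erase hf))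
      set S := ((E.erase e).filter fun f => ¬ Disjoint e f).image γ with hS
      have hScard : S.card ≤ m := le_trans Finset.card_image_le (h e he)
      have hne : (L e \ S).Nonempty := by
        have h2 := Finset.le_card_sdiff S (L e)
        have := hL e he
        rw [← Finset.card_pos]
        omega
      obtain ⟨c, hc⟩ := hne
      rw [Finset.mem_sdiff] at hc
      refine ⟨Function.update γ e c, ?_, ?_⟩
      · intro f hf
        rcases eq_or_ne f e with rfl | hne
        · simpa using hc.1
        · rw [Function.update_of_ne hne]
          exact hγ1 f (Finset.mem_erase.mpr ⟨hne, hf⟩)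
      · intro f hf g hg hfg heq
        rcases eq_or_ne f e with rfl | hfe
        · rw [Function.update_self, Function.update_of_ne (Ne.symm hfg)] at heq
          by_contra hdis
          exact hc.2 (heq ▸ Finset.mem_image_of_mem γ
            (Finset.mem_filter.mpr ⟨Finset.mem_erase.mpr ⟨Ne.symm hfg, hg⟩, hdis⟩))
        · rcases eq_or_ne g e with rfl | hge
          · rw [Function.update_self, Function.update_of_ne hfe] at heq
            by_contra hdis
            refine hc.2 (heq ▸ Finset.mem_image_of_mem γ
              (Finset.mem_filter.mpr ⟨Finset.mem_erase.mpr ⟨hfe, hf⟩, fun hd => hdis hd.symm⟩))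
          · rw [Function.update_of_ne hfe, Function.update_of_ne hge] at heq
            exact hγ2 f (Finset.mem_erase.mpr ⟨hfe, hf⟩) g (Finset.mem_erase.mpr ⟨hge, hg⟩) hfg heq

lemma neighbor_bound (E : Finset (Finset V)) (e : Finset V) (he : e ∈ E) (Δ : ℕ)
    (hΔ : ∀ x, deg E x ≤ Δ) :
    ((E.erase e).filter fun f => ¬ Disjoint e f).card ≤ e.card * (Δ - 1) := by
  have hsub : ((E.erase e).filter fun f => ¬ Disjoint e f) ⊆
      e.biUnion fun x => (E.erase e).filter fun f => x ∈ f := by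
    intro f hf
    simp only [Finset.mem_filter] at hf
    obtain ⟨x, hx1, hx2⟩ := Finset.not_disjoint_iff.mp hf.2
    exact Finset.mem_biUnion.mpr ⟨x, hx1, Finset.mem_filter.mpr ⟨hf.1, hx2⟩⟩
  calc ((E.erase e).filter fun f => ¬ Disjoint e f).card
      ≤ _ := Finset.card_le_card hsub
    _ ≤ ∑ x ∈ e, ((E.erase e).filter fun f => x ∈ f).card := Finset.card_biUnion_le
    _ ≤ ∑ x ∈ e, (Δ - 1) := Finset.sum_le_sum (by
        intro x hx
        have hss : (E.erase e).filter (fun f => x ∈ f) ⊆ (E.filter fun f => x ∈ f).erase e := by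
          intro f hf
          simp only [Finset.mem_filter, Finset.mem_erase] at *
          tauto
        have h1 : ((E.filter fun f => x ∈ f).erase e).card = deg E x - 1 :=
          Finset.card_erase_of_mem (Finset.mem_filter.mpr ⟨he, hx⟩)
        calc ((E.erase e).filter fun f => x ∈ f).card ≤ _ := Finset.card_le_card hss
          _ = deg E x - 1 := h1
          _ ≤ Δ - 1 := Nat.sub_le_sub_right (hΔ x) 1)
    _ = e.card * (Δ - 1) := by rw [Finset.sum_const, smul_eq_mul]

/-- Conjecture C2 implies Conjecture C3. -/
theorem stmt4
    (C2 : ∀ (V : Type) [DecidableEq V] [Fintype V] (E : Finset (Finset V)) (k : ℕ),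
      Linear E → (∀ e ∈ E, 2 ≤ e.card) → (∀ x : V, cliqueDeg E x ≤ k) →
      qList E ≤ k + 1) :
    ∀ (V : Type) [DecidableEq V] [Fintype V] (E : Finset (Finset V)) (P Δ : ℕ),
      Linear E → (∀ e ∈ E, 2 ≤ e.card) →
      P = E.sup Finset.card → Δ = Finset.univ.sup (deg E) →
      qList E ≤ Δ * P - max Δ P + 1 := by
  intro V _ _ E P Δ hlin hr hP hΔ
  have hdeg : ∀ x, deg E x ≤ Δ := fun x => hΔ ▸ Finset.le_sup (Finset.mem_univ x)
  have hrank : ∀ e ∈ E, e.card ≤ P := fun e he => hP ▸ Finset.le_sup he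
  rcases le_total P Δ with hPΔ | hΔP
  · -- Δ ≥ P: apply C2 with k = Δ * (P - 1)
    have hcd : ∀ x : V, cliqueDeg E x ≤ Δ * (P - 1) := by
      intro x
      calc cliqueDeg E x ≤ ∑ e ∈ E.filter (fun e => x ∈ e), (P - 1) :=
            Finset.sum_le_sum fun e he =>
              Nat.sub_le_sub_right (hrank e (Finset.mem_filter.mp he).1) 1
        _ = deg E x * (P - 1) := by rw [Finset.sum_const, smul_eq_mul]; rfl
        _ ≤ Δ * (P - 1) := Nat.mul_le_mul_right _ (hdeg x)
    have hC2 := C2 V E (Δ * (P - 1)) hlin hr hcd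
    have harith : Δ * (P - 1) = Δ * P - max Δ P := by
      rw [max_eq_left hPΔ]
      cases P with
      | zero => simp
      | succ p => rw [Nat.mul_succ]; simp
    rwa [harith] at hC2
  · -- P ≥ Δ: greedy coloring
    have key : ListColorable E (P * (Δ - 1) + 1) := by
      refine greedy (P * (Δ - 1)) E ?_
      intro e he
      calc ((E.erase e).filter fun f => ¬ Disjoint e f).card
          ≤ e.card * (Δ - 1) := neighbor_bound E e he Δ hdeg
        _ ≤ P * (Δ - 1) := Nat.mul_le_mul_right _ (hrank e he)
    have hq : qList E ≤ P * (Δ - 1) + 1 := Nat.sInf_le key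
    have harith : P * (Δ - 1) = Δ * P - max Δ P := by
      rw [max_eq_right hΔP, Nat.mul_comm]
      cases Δ with
      | zero => simp
      | succ d => rw [Nat.succ_mul]; simp
    rwa [harith] at hq
end

section
/- Let H be a linear hypergraph with n vertices, no rank-1 edges, and maximum degree Δ ≥ 2. If n > (Δ − 1)², then q_list(H) ≤ n. -/
open Finset

variable {V : Type*} [DecidableEq V]

private lemma arith_key (n r Δ : ℕ) (hΔ2 : 2 ≤ Δ) (hn : (Δ - 1) ^ 2 < n)
    (hr2 : 2 ≤ r) (hrn : r ≤ n) (hcase : n ≤ r * (Δ - 1)) :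
    (n - r) * Δ ≤ (n - 1) * (r - 1) := by
  have hΔr : Δ - 1 < r := by
    have h1 : (Δ - 1) * (Δ - 1) < r * (Δ - 1) := by
      calc (Δ - 1) * (Δ - 1) = (Δ - 1) ^ 2 := (sq (Δ - 1)).symm
        _ < n := hn
        _ ≤ r * (Δ - 1) := hcase
    exact Nat.lt_of_mul_lt_mul_right h1
  have hΔr' : Δ ≤ r := by omega
  have hc : (n : ℤ) ≤ r * (Δ - 1) := by
    have := hcase
    zify [show 1 ≤ Δ by omega] at this
    exact this
  zify [show 1 ≤ n by omega, hrn, show 1 ≤ r by omega]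
  have h1 : (Δ : ℤ) ≤ r := by exact_mod_cast hΔr'
  have h2 : (0 : ℤ) ≤ n := by positivity
  nlinarith [mul_le_mul_of_nonneg_left h1 h2]

private lemma neighbors_card_le {V : Type*} [DecidableEq V] [Fintype V]
    (E : Finset (Finset V)) (Δ : ℕ) (hlin : Linear E) (h2 : ∀ e ∈ E, 2 ≤ e.card)
    (hdeg : ∀ x, deg E x ≤ Δ) (hΔ2 : 2 ≤ Δ) (hn : (Δ - 1) ^ 2 < Fintype.card V)
    (e : Finset V) (he : e ∈ E) (hmin : ∀ f ∈ E, e.card ≤ f.card) :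
    ((E.erase e).filter (fun f => ¬ Disjoint e f)).card ≤ Fintype.card V - 1 := by
  set n := Fintype.card V with hn'
  set r := e.card with hr'
  set N := (E.erase e).filter (fun f => ¬ Disjoint e f) with hN
  have hr2 : 2 ≤ r := h2 e he
  have hrn : r ≤ n := by rw [hn', ← card_univ]; exact card_le_card (subset_univ e)
  rcases lt_or_ge (r * (Δ - 1)) n with hcase | hcase
  · -- bound A : through each vertex of e, at most Δ - 1 other edges
    have hvert : ∀ x ∈ e, ((E.erase e).filter (fun f => x ∈ f)).card ≤ Δ - 1 := by
      intro x hx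
      have heq : (E.erase e).filter (fun f => x ∈ f) = (E.filter (fun f => x ∈ f)).erase e := by
        ext f; simp only [mem_filter, mem_erase]; tauto
      rw [heq, card_erase_of_mem (mem_filter.mpr ⟨he, hx⟩)]
      exact Nat.sub_le_sub_right (hdeg x) 1
    have hsub : N ⊆ e.biUnion (fun x => (E.erase e).filter (fun f => x ∈ f)) := by
      intro f hf
      simp only [hN, mem_filter] at hf
      obtain ⟨x, hx1, hx2⟩ := not_disjoint_iff.mp hf.2
      exact mem_biUnion.mpr ⟨x, hx1, mem_filter.mpr ⟨hf.1, hx2⟩⟩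
    calc N.card ≤ (e.biUnion (fun x => (E.erase e).filter (fun f => x ∈ f))).card :=
          card_le_card hsub
      _ ≤ ∑ x ∈ e, ((E.erase e).filter (fun f => x ∈ f)).card := card_biUnion_le
      _ ≤ ∑ _x ∈ e, (Δ - 1) := sum_le_sum hvert
      _ = r * (Δ - 1) := by rw [sum_const, smul_eq_mul]
      _ ≤ n - 1 := by omega
  · -- bound B : double counting vertices outside e
    have hkey : ∀ f ∈ N, r - 1 ≤ (f \ e).card := by
      intro f hf
      simp only [hN, mem_filter, mem_erase] at hf
      have h1 : (f ∩ e).card ≤ 1 := hlin f hf.1.2 e he hf.1.1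
      have h2' : r ≤ f.card := hmin f hf.1.2
      have h3 := card_sdiff_add_card_inter f e
      omega
    have hsum1 : N.card * (r - 1) ≤ ∑ f ∈ N, (f \ e).card := by
      calc N.card * (r - 1) = ∑ _f ∈ N, (r - 1) := by rw [sum_const, smul_eq_mul]
        _ ≤ ∑ f ∈ N, (f \ e).card := sum_le_sum hkey
    have hswap : ∑ f ∈ N, (f \ e).card
        = ∑ v ∈ univ \ e, (N.filter (fun f => v ∈ f)).card := by
      have h1 : ∀ f : Finset V, f \ e = (univ \ e).filter (fun v => v ∈ f) := by
        intro f; ext v; simp [mem_sdiff, mem_filter]; tauto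
      calc ∑ f ∈ N, (f \ e).card
          = ∑ f ∈ N, ∑ v ∈ univ \ e, if v ∈ f then 1 else 0 :=
            sum_congr rfl fun f _ => by rw [h1 f, card_filter]
        _ = ∑ v ∈ univ \ e, ∑ f ∈ N, if v ∈ f then 1 else 0 := Finset.sum_comm
        _ = ∑ v ∈ univ \ e, (N.filter (fun f => v ∈ f)).card :=
            sum_congr rfl fun v _ => (card_filter _ _).symm
    have hsum2 : ∑ v ∈ univ \ e, (N.filter (fun f => v ∈ f)).card ≤ (n - r) * Δ := by
      calc ∑ v ∈ univ \ e, (N.filter (fun f => v ∈ f)).card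
          ≤ ∑ _v ∈ univ \ e, Δ := by
            refine sum_le_sum fun v _ => ?_
            refine le_trans (card_le_card ?_) (hdeg v)
            intro f hf
            simp only [hN, mem_filter, mem_erase] at hf ⊢
            exact ⟨hf.1.1.2, hf.2⟩
        _ = (n - r) * Δ := by
            rw [sum_const, smul_eq_mul, card_sdiff_of_subset (subset_univ e), card_univ]
    have harith := arith_key n r Δ hΔ2 hn hr2 hrn hcase
    have hfin : N.card * (r - 1) ≤ (n - 1) * (r - 1) :=
      hsum1.trans (hswap ▸ hsum2.trans harith)
    exact Nat.le_of_mul_le_mul_right hfin (by omega)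

private lemma colorable_aux {V : Type*} [DecidableEq V] [Fintype V] (Δ : ℕ)
    (hΔ2 : 2 ≤ Δ) (hn : (Δ - 1) ^ 2 < Fintype.card V) :
    ∀ E : Finset (Finset V), Linear E → (∀ e ∈ E, 2 ≤ e.card) → (∀ x, deg E x ≤ Δ) →
      ListColorable E (Fintype.card V) := by
  intro E
  induction E using Finset.strongInduction with
  | _ E ih =>
    intro hlin h2 hdeg L hL
    rcases E.eq_empty_or_nonempty with rfl | hne
    · exact ⟨fun _ => 0, by simp [IsProperListColoring]⟩
    obtain ⟨e, he, hmin⟩ := E.exists_min_image Finset.card hne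
    have hE' : E.erase e ⊂ E := erase_ssubset he
    have hlin' : Linear (E.erase e) := fun a ha b hb hab =>
      hlin a (mem_of_mem_erase ha) b (mem_of_mem_erase hb) hab
    have hdeg' : ∀ x, deg (E.erase e) x ≤ Δ := fun x =>
      le_trans (card_le_card (filter_subset_filter _ (erase_subset e E))) (hdeg x)
    obtain ⟨γ, hγ1, hγ2⟩ := ih (E.erase e) hE' hlin'
      (fun f hf => h2 f (mem_of_mem_erase hf)) hdeg' L
      (fun f hf => hL f (mem_of_mem_erase hf))
    set N := (E.erase e).filter (fun f => ¬ Disjoint e f) with hN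
    have hNcard := neighbors_card_le E Δ hlin h2 hdeg hΔ2 hn e he hmin
    have hcard : (N.image γ).card < (L e).card := by
      rw [hL e he]
      have h0 : 0 < Fintype.card V := (Nat.zero_le _).trans_lt hn
      calc (N.image γ).card ≤ N.card := card_image_le
        _ ≤ Fintype.card V - 1 := hNcard
        _ < Fintype.card V := by omega
    have hsd : (L e \ N.image γ).Nonempty := by
      rw [← card_pos]
      have := le_card_sdiff (N.image γ) (L e)
      omega
    obtain ⟨c, hc⟩ := hsd
    obtain ⟨hc1, hc2⟩ := mem_sdiff.mp hc
    refine ⟨Function.update γ e c, ?_, ?_⟩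
    · intro f hf
      rcases eq_or_ne f e with rfl | hfe
      · simpa using hc1
      · rw [Function.update_of_ne hfe]
        exact hγ1 f (mem_erase.mpr ⟨hfe, hf⟩)
    · intro f hf g hg hfg hcol
      have key : ∀ g ∈ E, g ≠ e → c = γ g → Disjoint e g := by
        intro g hg hge hcg
        by_contra hd
        exact hc2 (mem_image.mpr ⟨g, mem_filter.mpr ⟨mem_erase.mpr ⟨hge, hg⟩, hd⟩, hcg.symm⟩)
      rcases eq_or_ne f e with rfl | hfe
      · rw [Function.update_self] at hcol
        rw [Function.update_of_ne (Ne.symm hfg)] at hcol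
        exact key g hg (Ne.symm hfg) hcol
      · rw [Function.update_of_ne hfe] at hcol
        rcases eq_or_ne g e with rfl | hge
        · rw [Function.update_self] at hcol
          exact (key f hf hfe hcol.symm).symm
        · rw [Function.update_of_ne hge] at hcol
          exact hγ2 f (mem_erase.mpr ⟨hfe, hf⟩) g (mem_erase.mpr ⟨hge, hg⟩) hfg hcol

/-- A linear hypergraph on `n` vertices with no rank-1 edges and maximum degree
`Δ ≥ 2` with `n > (Δ - 1)²` satisfies `q_list(H) ≤ n`. -/
theorem stmt7 {V : Type*} [DecidableEq V] [Fintype V] (E : Finset (Finset V)) (Δ : ℕ)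
    (hlin : Linear E) (h2 : ∀ e ∈ E, 2 ≤ e.card)
    (hΔ : Δ = Finset.univ.sup (deg E)) (hΔ2 : 2 ≤ Δ)
    (hn : (Δ - 1) ^ 2 < Fintype.card V) :
    qList E ≤ Fintype.card V := by
  have hdeg : ∀ x, deg E x ≤ Δ := fun x => hΔ ▸ Finset.le_sup (mem_univ x)
  exact Nat.sInf_le (colorable_aux Δ hΔ2 hn E hlin h2 hdeg)
end

section
/- Assume Conjecture C4 holds. Let H be a linear hypergraph with n vertices and no rank-1 edges, let Δ be the maximum degree of H_3, and suppose the maximum degree of H_2 satisfies Δ(H_2) ≤ n − 2Δ − 1. Then for any assignment of lists of size n to all edges of H, every list edge coloring of H_3 from these lists can be extended to a list edge coloring of H from these lists. -/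
open Finset

variable {V : Type*} [DecidableEq V]

set_option linter.unusedSectionVars false in
lemma greedy_s11 (E : Finset (Finset V)) (L : Finset V → Finset ℕ)
    (hL : ∀ e ∈ E, E.card ≤ (L e).card) :
    ∃ γ, IsProperListColoring E L γ := by
  classical
  induction E using Finset.induction_on with
  | empty => exact ⟨fun _ => 0, by simp [IsProperListColoring]⟩
  | @insert a s ha ih =>
    obtain ⟨γ, hγ1, hγ2⟩ := ih (fun e he => le_trans (by simp [Finset.card_insert_of_notMem ha]) (hL e (Finset.mem_insert_of_mem he)))
    have hlt : (s.image γ).card < (L a).card := by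
      have h1 : (s.image γ).card ≤ s.card := Finset.card_image_le
      have h2 : s.card + 1 ≤ (L a).card := by
        have := hL a (Finset.mem_insert_self a s)
        rwa [Finset.card_insert_of_notMem ha] at this
      omega
    obtain ⟨c, hcL, hcim⟩ := Finset.not_subset.mp fun hs => absurd (Finset.card_le_card hs) (not_le.mpr hlt)
    refine ⟨fun e => if e = a then c else γ e, ?_, ?_⟩
    · intro e he
      rcases Finset.mem_insert.mp he with rfl | he
      · simpa using hcL
      · have : e ≠ a := fun h => ha (h ▸ he)
        simpa [this] using hγ1 e he
    · intro e he f hf hne heq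
      simp only [Finset.mem_insert] at he hf
      by_cases hea : e = a <;> by_cases hfa : f = a
      · exact absurd (hea.trans hfa.symm) hne
      · subst hea
        have hf' : f ∈ s := hf.resolve_left hfa
        simp only [if_pos, hfa, ite_true, ite_false] at heq
        exact absurd (show c ∈ s.image γ by rw [heq]; exact Finset.mem_image_of_mem γ hf') hcim
      · subst hfa
        have he' : e ∈ s := he.resolve_left hea
        simp only [if_pos, hea, ite_true, ite_false] at heq
        exact absurd (show c ∈ s.image γ by rw [← heq]; exact Finset.mem_image_of_mem γ he') hcim
      · simp only [hea, hfa, ite_false] at heq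
        exact hγ2 e (he.resolve_left hea) f (hf.resolve_left hfa) hne heq

lemma colorable_mono {E : Finset (Finset V)} {m : ℕ}
    (h : ListColorable E m) (L : Finset V → Finset ℕ)
    (hL : ∀ e ∈ E, m ≤ (L e).card) : ∃ γ, IsProperListColoring E L γ := by
  choose T hT1 hT2 using fun e => Finset.exists_subset_card_eq (min_le_right m (L e).card)
  obtain ⟨γ, hγ1, hγ2⟩ := h T (fun e he => by rw [hT2]; exact min_eq_left (hL e he))
  exact ⟨γ, fun e he => hT1 e (hγ1 e he), hγ2⟩

/-- Assuming the weak Vizing list conjecture C4: if `H` is a linear hypergraph on `n`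
vertices with no rank-1 edges, `Δ` is the maximum degree of `H₃` (edges of rank ≥ 3),
and the maximum degree of `H₂` (rank-2 edges) is at most `n - 2Δ - 1`, then any list
`n`-coloring of `H₃` extends to a list `n`-coloring of `H`. -/
theorem stmt11
    (C4 : ∀ (W : Type) [DecidableEq W] (G : Finset (Finset W)) (k : ℕ),
      (∀ e ∈ G, e.card = 2) → (∀ x : W, deg G x ≤ k) → qList G ≤ k + 1)
    {V : Type} [DecidableEq V] [Fintype V] (E : Finset (Finset V)) (Δ : ℕ)
    (hlin : Linear E) (h2 : ∀ e ∈ E, 2 ≤ e.card)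
    (hΔ : Δ = Finset.univ.sup (deg (E.filter fun e => 3 ≤ e.card)))
    (hH2 : Finset.univ.sup (deg (E.filter fun e => e.card = 2)) ≤
      Fintype.card V - 2 * Δ - 1)
    (L : Finset V → Finset ℕ) (hL : ∀ e ∈ E, (L e).card = Fintype.card V)
    (γ3 : Finset V → ℕ)
    (hγ3 : IsProperListColoring (E.filter fun e => 3 ≤ e.card) L γ3) :
    ∃ γ : Finset V → ℕ, IsProperListColoring E L γ ∧
      ∀ e ∈ E.filter (fun e => 3 ≤ e.card), γ e = γ3 e := by
  classical
  obtain ⟨hγ3L, hγ3p⟩ := hγ3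
  set n := Fintype.card V with hn
  set E2 := E.filter (fun e => e.card = 2) with hE2def
  set E3 := E.filter (fun e => 3 ≤ e.card) with hE3def
  by_cases hne : E2.Nonempty
  · set k := Finset.univ.sup (deg E2) with hk
    have hdeg3 : ∀ x : V, deg E3 x ≤ Δ := fun x => hΔ ▸ Finset.le_sup (Finset.mem_univ x)
    have hdeg2 : ∀ x : V, deg E2 x ≤ k := fun x => Finset.le_sup (Finset.mem_univ x)
    obtain ⟨e0, he0⟩ := hne
    obtain ⟨he0E, he0c⟩ := Finset.mem_filter.mp he0
    obtain ⟨x0, hx0⟩ := Finset.card_pos.mp (by omega : 0 < e0.card)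
    have hk1 : 1 ≤ k := le_trans
      (Finset.card_pos.mpr ⟨e0, Finset.mem_filter.mpr ⟨he0, hx0⟩⟩) (hdeg2 x0)
    have hkn : k ≤ n - 2*Δ - 1 := hH2
    have hn2 : 2*Δ + 2 ≤ n := by omega
    set F : Finset V → Finset ℕ :=
      fun e => (E3.filter (fun f => ¬ Disjoint e f)).image γ3 with hF
    have hFcard : ∀ e ∈ E2, (F e).card ≤ 2*Δ := by
      intro e he
      obtain ⟨heE, hec⟩ := Finset.mem_filter.mp he
      obtain ⟨x, y, hxy, rfl⟩ := Finset.card_eq_two.mp hec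
      calc (F ({x, y} : Finset V)).card
          ≤ (E3.filter (fun f => ¬ Disjoint ({x, y} : Finset V) f)).card :=
            Finset.card_image_le
        _ ≤ ((E3.filter (fun f => x ∈ f)) ∪ (E3.filter (fun f => y ∈ f))).card := by
            apply Finset.card_le_card
            intro f hf
            obtain ⟨hfE, hfd⟩ := Finset.mem_filter.mp hf
            rw [Finset.not_disjoint_iff] at hfd
            obtain ⟨z, hz1, hz2⟩ := hfd
            simp only [Finset.mem_insert, Finset.mem_singleton] at hz1
            rcases hz1 with rfl | rfl
            · exact Finset.mem_union_left _ (Finset.mem_filter.mpr ⟨hfE, hz2⟩)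
            · exact Finset.mem_union_right _ (Finset.mem_filter.mpr ⟨hfE, hz2⟩)
        _ ≤ deg E3 x + deg E3 y := Finset.card_union_le _ _
        _ ≤ 2*Δ := by have := hdeg3 x; have := hdeg3 y; omega
    have hq : qList E2 ≤ k + 1 := C4 V E2 k (fun e he => (Finset.mem_filter.mp he).2) hdeg2
    have hSne : {m | ListColorable E2 m}.Nonempty :=
      ⟨E2.card, fun L' hL' => greedy_s11 E2 L' (fun e he => (hL' e he).ge)⟩
    have hmem : ListColorable E2 (sInf {m | ListColorable E2 m}) := Nat.sInf_mem hSne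
    have hle : sInf {m | ListColorable E2 m} ≤ k + 1 := hq
    obtain ⟨γ2, hγ2L, hγ2p⟩ := colorable_mono hmem (fun e => L e \ F e) (by
      intro e he
      have h1 : (L e).card - (F e).card ≤ (L e \ F e).card := Finset.le_card_sdiff _ _
      have h2' : (L e).card = n := hL e (Finset.mem_filter.mp he).1
      have h3 := hFcard e he
      show sInf {m | ListColorable E2 m} ≤ (L e \ F e).card
      omega)
    refine ⟨fun e => if e.card = 2 then γ2 e else γ3 e, ⟨?_, ?_⟩, ?_⟩
    · intro e heE
      by_cases hc : e.card = 2
      · have heq2 : e ∈ E2 := Finset.mem_filter.mpr ⟨heE, hc⟩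
        simp only [if_pos hc]
        exact (Finset.mem_sdiff.mp (hγ2L e heq2)).1
      · have h3c : 3 ≤ e.card := by have := h2 e heE; omega
        simp only [if_neg hc]
        exact hγ3L e (Finset.mem_filter.mpr ⟨heE, h3c⟩)
    · intro e heE f hfE hnef heq
      simp only at heq
      by_cases hce : e.card = 2 <;> by_cases hcf : f.card = 2
      · rw [if_pos hce, if_pos hcf] at heq
        exact hγ2p e (Finset.mem_filter.mpr ⟨heE, hce⟩) f
          (Finset.mem_filter.mpr ⟨hfE, hcf⟩) hnef heq
      · rw [if_pos hce, if_neg hcf] at heq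
        have hf3 : f ∈ E3 := Finset.mem_filter.mpr ⟨hfE, by have := h2 f hfE; omega⟩
        by_contra hdis
        have hmemF : γ3 f ∈ F e :=
          Finset.mem_image_of_mem γ3 (Finset.mem_filter.mpr ⟨hf3, hdis⟩)
        have hnotF := (Finset.mem_sdiff.mp (hγ2L e (Finset.mem_filter.mpr ⟨heE, hce⟩))).2
        rw [heq] at hnotF
        exact hnotF hmemF
      · rw [if_neg hce, if_pos hcf] at heq
        have he3 : e ∈ E3 := Finset.mem_filter.mpr ⟨heE, by have := h2 e heE; omega⟩
        by_contra hdis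
        have hdis' : ¬ Disjoint f e := fun h => hdis h.symm
        have hmemF : γ3 e ∈ F f :=
          Finset.mem_image_of_mem γ3 (Finset.mem_filter.mpr ⟨he3, hdis'⟩)
        have hnotF := (Finset.mem_sdiff.mp (hγ2L f (Finset.mem_filter.mpr ⟨hfE, hcf⟩))).2
        rw [← heq] at hnotF
        exact hnotF hmemF
      · rw [if_neg hce, if_neg hcf] at heq
        exact hγ3p e (Finset.mem_filter.mpr ⟨heE, by have := h2 e heE; omega⟩) f
          (Finset.mem_filter.mpr ⟨hfE, by have := h2 f hfE; omega⟩) hnef heq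
    · intro e he
      have h3c : 3 ≤ e.card := (Finset.mem_filter.mp he).2
      simp only [if_neg (show ¬ e.card = 2 by omega)]
  · have hE3all : ∀ e ∈ E, e ∈ E3 := by
      intro e he
      refine Finset.mem_filter.mpr ⟨he, ?_⟩
      have h2e := h2 e he
      by_contra hlt
      exact hne ⟨e, Finset.mem_filter.mpr ⟨he, by omega⟩⟩
    exact ⟨γ3, ⟨fun e he => hγ3L e (hE3all e he),
      fun e he f hf => hγ3p e (hE3all e he) f (hE3all f hf)⟩, fun e _ => rfl⟩
end

section
/- Assume Conjecture C4 holds. Let H be a linear hypergraph with n vertices and no rank-1 edges, let Δ be the maximum degree of H_3, and suppose every vertex x satisfies D(x, H_3) ≥ 2Δ. Then for any assignment of lists of size n to all edges of H, every list edge coloring of H_3 from these lists can be extended to a list edge coloring of H from these lists. -/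
open Finset

variable {V : Type*} [DecidableEq V]

/-
The rank-2 edges through `x` and the sets `e \ {x}` for the larger edges through `x` are pairwise
disjoint by linearity, so `d(x, H₂) + D(x, H₃) ≤ n - 1`, and `D(x, H₃) ≥ 2Δ` leaves
`d(x, H₂) ≤ n - 1 - 2Δ`. A rank-2 edge meets at most `2Δ` edges of `H₃`; deleting their colors
from its list leaves at least `n - 2Δ` colors, and C4 colors `H₂` from these shortened lists.
-/

namespace ListColorable

variable {α : Type*} {E : Finset (Finset α)} {k : ℕ}

theorem exists_of_le_card (h : ListColorable E k) {L : Finset α → Finset ℕ}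
    (hL : ∀ e ∈ E, k ≤ (L e).card) : ∃ γ, IsProperListColoring E L γ := by
  choose! L' hL'sub hL'card using fun e (he : e ∈ E) => Finset.exists_subset_card_eq (hL e he)
  obtain ⟨γ, hmem, hdisj⟩ := h L' hL'card
  exact ⟨γ, fun e he => hL'sub e he (hmem e he), hdisj⟩

theorem mono (h : ListColorable E k) {k' : ℕ} (hk : k ≤ k') : ListColorable E k' :=
  fun _ hL => h.exists_of_le_card fun e he => (hL e he).symm ▸ hk

end ListColorable

-- Hall's theorem: lists of size `#E` have a system of distinct representatives.
theorem listColorable_card (E : Finset (Finset V)) : ListColorable E E.card := by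
  intro L hL
  obtain ⟨f, hf_inj, hf_mem⟩ :=
    (Finset.all_card_le_biUnion_card_iff_exists_injective fun e : E => L e).1 fun s => by
      rcases s.eq_empty_or_nonempty with rfl | ⟨e, he⟩
      · simp
      · calc s.card ≤ E.card := by simpa using s.card_le_univ
          _ = (L e).card := (hL e e.2).symm
          _ ≤ (s.biUnion fun e : E => L e).card :=
            card_le_card (subset_biUnion_of_mem (fun e : E => L e) he)
  refine ⟨fun e => if he : e ∈ E then f ⟨e, he⟩ else 0, fun e he => by simpa [he] using hf_mem _,
    fun e he g hg hne heq => absurd ?_ hne⟩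
  simp only [he, hg, dite_true] at heq
  exact congrArg Subtype.val (hf_inj heq)

theorem listColorable_of_qList_le {E : Finset (Finset V)} {k : ℕ} (h : qList E ≤ k) :
    ListColorable E k :=
  (Nat.sInf_mem (s := {k | ListColorable E k}) ⟨E.card, listColorable_card E⟩).mono h

theorem cliqueDeg_le_card_sub_one [Fintype V] {E : Finset (Finset V)} (hlin : Linear E)
    (x : V) : cliqueDeg E x ≤ Fintype.card V - 1 := by
  set F := E.filter fun e => x ∈ e
  have hdisj : (F : Set (Finset V)).PairwiseDisjoint fun e => e.erase x := by
    intro e he f hf hne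
    simp only [Finset.coe_filter, F] at he hf
    refine Finset.disjoint_left.2 fun y hye hyf => ?_
    rw [Finset.mem_erase] at hye hyf
    have hpair : ({x, y} : Finset V) ⊆ e ∩ f := by
      simp [Finset.insert_subset_iff, he.2, hf.2, hye.2, hyf.2]
    have := card_le_card hpair
    rw [card_pair (Ne.symm hye.1)] at this
    have := hlin e he.1 f hf.1 hne
    omega
  calc cliqueDeg E x = ∑ e ∈ F, (e.erase x).card :=
        sum_congr rfl fun e he => (card_erase_of_mem (mem_filter.1 he).2).symm
    _ = (F.biUnion fun e => e.erase x).card := (card_biUnion hdisj).symm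
    _ ≤ (univ.erase x).card :=
        card_le_card fun y hy => by
          obtain ⟨e, -, hye⟩ := mem_biUnion.1 hy
          exact mem_erase.2 ⟨(mem_erase.1 hye).1, mem_univ y⟩
    _ = Fintype.card V - 1 := by rw [card_erase_of_mem (mem_univ x), card_univ]

theorem cliqueDeg_filter_add_cliqueDeg_filter_not (E : Finset (Finset V))
    (p : Finset V → Prop) [DecidablePred p] (x : V) :
    cliqueDeg (E.filter p) x + cliqueDeg (E.filter fun e => ¬ p e) x = cliqueDeg E x := by
  simp only [cliqueDeg, filter_comm _ (fun e => x ∈ e)]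
  exact sum_filter_add_sum_filter_not _ _ _

theorem cliqueDeg_eq_deg {E : Finset (Finset V)} (hE : ∀ e ∈ E, e.card = 2) (x : V) :
    cliqueDeg E x = deg E x := by
  rw [cliqueDeg, deg, card_eq_sum_ones]
  exact sum_congr rfl fun e he => by rw [hE e (mem_filter.1 he).1]

theorem card_filter_not_disjoint_le (E : Finset (Finset V)) (s : Finset V) :
    (E.filter fun f => ¬ Disjoint s f).card ≤ ∑ x ∈ s, deg E x := by
  refine (card_le_card fun f hf => ?_).trans card_biUnion_le
  obtain ⟨hfE, hsf⟩ := mem_filter.1 hf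
  obtain ⟨x, hxs, hxf⟩ := not_disjoint_iff.1 hsf
  exact mem_biUnion.2 ⟨x, hxs, mem_filter.2 ⟨hfE, hxf⟩⟩

def colorsMeeting (A : Finset (Finset V)) (γ : Finset V → ℕ) (e : Finset V) : Finset ℕ :=
  (A.filter fun f => ¬ Disjoint e f).image γ

theorem card_colorsMeeting_le (A : Finset (Finset V)) (γ : Finset V → ℕ) (e : Finset V) :
    (colorsMeeting A γ e).card ≤ ∑ x ∈ e, deg A x :=
  card_image_le.trans (card_filter_not_disjoint_le A e)

theorem disjoint_of_mem_sdiff_colorsMeeting {A : Finset (Finset V)} {γ : Finset V → ℕ}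
    {e f : Finset V} {c : ℕ} {S : Finset ℕ} (hc : c ∈ S \ colorsMeeting A γ e) (hf : f ∈ A)
    (hcf : c = γ f) : Disjoint e f := by
  by_contra hef
  exact (mem_sdiff.1 hc).2 (hcf ▸ mem_image_of_mem γ (mem_filter.2 ⟨hf, hef⟩))

theorem IsProperListColoring.piecewise {E : Finset (Finset V)} (p : Finset V → Prop)
    [DecidablePred p] {L : Finset V → Finset ℕ} {γ₁ γ₂ : Finset V → ℕ}
    (h₁ : IsProperListColoring (E.filter p) L γ₁)
    (h₂ : IsProperListColoring (E.filter fun e => ¬ p e)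
      (fun e => L e \ colorsMeeting (E.filter p) γ₁ e) γ₂) :
    IsProperListColoring E L fun e => if p e then γ₁ e else γ₂ e := by
  have mem₁ {e} (he : e ∈ E) (hp : p e) : e ∈ E.filter p := mem_filter.2 ⟨he, hp⟩
  have mem₂ {e} (he : e ∈ E) (hp : ¬ p e) : e ∈ E.filter fun e => ¬ p e := mem_filter.2 ⟨he, hp⟩
  refine ⟨fun e he => ?_, fun e he f hf hne heq => ?_⟩
  · by_cases hp : p e
    · simpa [hp] using h₁.1 e (mem₁ he hp)
    · simpa [hp] using (mem_sdiff.1 (h₂.1 e (mem₂ he hp))).1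
  · by_cases hpe : p e <;> by_cases hpf : p f <;> simp only [hpe, hpf, if_true, if_false] at heq
    · exact h₁.2 e (mem₁ he hpe) f (mem₁ hf hpf) hne heq
    · exact (disjoint_of_mem_sdiff_colorsMeeting (h₂.1 f (mem₂ hf hpf)) (mem₁ he hpe)
        heq.symm).symm
    · exact disjoint_of_mem_sdiff_colorsMeeting (h₂.1 e (mem₂ he hpe)) (mem₁ hf hpf) heq
    · exact h₂.2 e (mem₂ he hpe) f (mem₂ hf hpf) hne heq

/-- Assuming the weak Vizing list conjecture C4: if `H` is a linear hypergraph on `n`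
vertices with no rank-1 edges, `Δ` is the maximum degree of `H₃` (edges of rank ≥ 3),
and every vertex satisfies `D(x, H₃) ≥ 2Δ`, then any list `n`-coloring of `H₃`
extends to a list `n`-coloring of `H`. -/
theorem stmt12
    (C4 : ∀ (W : Type) [DecidableEq W] (G : Finset (Finset W)) (k : ℕ),
      (∀ e ∈ G, e.card = 2) → (∀ x : W, deg G x ≤ k) → qList G ≤ k + 1)
    {V : Type} [DecidableEq V] [Fintype V] (E : Finset (Finset V)) (Δ : ℕ)
    (hlin : Linear E) (h2 : ∀ e ∈ E, 2 ≤ e.card)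
    (hΔ : Δ = Finset.univ.sup (deg (E.filter fun e => 3 ≤ e.card)))
    (hD : ∀ x : V, 2 * Δ ≤ cliqueDeg (E.filter fun e => 3 ≤ e.card) x)
    (L : Finset V → Finset ℕ) (hL : ∀ e ∈ E, (L e).card = Fintype.card V)
    (γ3 : Finset V → ℕ)
    (hγ3 : IsProperListColoring (E.filter fun e => 3 ≤ e.card) L γ3) :
    ∃ γ : Finset V → ℕ, IsProperListColoring E L γ ∧
      ∀ e ∈ E.filter (fun e => 3 ≤ e.card), γ e = γ3 e := by
  set E3 := E.filter fun e => 3 ≤ e.card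
  set E2 := E.filter fun e => ¬ 3 ≤ e.card
  have hE2 : ∀ e ∈ E2, e.card = 2 := fun e he => by
    have := h2 e (mem_filter.1 he).1; have := (mem_filter.1 he).2; omega
  have hdeg : ∀ x, deg E2 x + 2 * Δ ≤ Fintype.card V - 1 := fun x => by
    have hsplit : cliqueDeg E3 x + cliqueDeg E2 x = cliqueDeg E x :=
      cliqueDeg_filter_add_cliqueDeg_filter_not E _ x
    have hle := cliqueDeg_le_card_sub_one hlin x
    rw [cliqueDeg_eq_deg hE2] at hsplit
    linarith [hD x]
  have hcol := listColorable_of_qList_le <|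
    C4 V E2 (Fintype.card V - 1 - 2 * Δ) hE2 fun x => by have := hdeg x; omega
  have hlists :
      ∀ e ∈ E2, Fintype.card V - 1 - 2 * Δ + 1 ≤ (L e \ colorsMeeting E3 γ3 e).card := by
    intro e he
    obtain ⟨a, b, hab, rfl⟩ := card_eq_two.1 (hE2 e he)
    have hmeet : (colorsMeeting E3 γ3 {a, b}).card ≤ 2 * Δ := by
      have := card_colorsMeeting_le E3 γ3 {a, b}
      have ha : deg E3 a ≤ Δ := hΔ ▸ le_sup (mem_univ a)
      have hb : deg E3 b ≤ Δ := hΔ ▸ le_sup (mem_univ b)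
      rw [sum_pair hab] at this
      omega
    have hsdiff := le_card_sdiff (colorsMeeting E3 γ3 {a, b}) (L {a, b})
    have hcard : (L {a, b}).card = Fintype.card V := hL _ (mem_filter.1 he).1
    have hpos : 0 < Fintype.card V := Fintype.card_pos_iff.2 ⟨a⟩
    have ha := hdeg a
    omega
  obtain ⟨γ2, hγ2⟩ := hcol.exists_of_le_card hlists
  exact ⟨_, hγ3.piecewise _ hγ2, fun e he => if_pos (mem_filter.1 he).2⟩
end

section
/- Assume Conjecture C4 holds. Let H be a linear hypergraph with n vertices and no rank-1 edges, and suppose H_3 is regular, i.e., every vertex of H lies in exactly d edges of rank at least 3. Then for any assignment of lists of size n to all edges of H, every list edge coloring of H_3 from these lists can be extended to a list edge coloring of H from these lists. -/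
open Finset

variable {V : Type*} [DecidableEq V]

theorem aux_greedy (E : Finset (Finset V)) :
    ∀ L : Finset V → Finset ℕ, (∀ e ∈ E, E.card ≤ (L e).card) →
    ∃ γ : Finset V → ℕ, IsProperListColoring E L γ := by
  induction E using Finset.induction_on with
  | empty =>
    intro L _
    exact ⟨fun _ => 0, by simp [IsProperListColoring]⟩
  | @insert e s he ih =>
    intro L hL
    obtain ⟨γ, hγ1, hγ2⟩ := ih L (fun f hf =>
      le_trans (card_le_card (subset_insert _ _)) (hL f (mem_insert_of_mem hf)))
    have hlt : (s.image γ).card < (L e).card := by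
      have h1 : (s.image γ).card ≤ s.card := card_image_le
      have h2 : s.card < (insert e s).card := by
        rw [card_insert_of_notMem he]; omega
      have h3 := hL e (mem_insert_self e s)
      omega
    have hne : (L e \ s.image γ).Nonempty := by
      rw [← card_pos]
      have := Finset.le_card_sdiff (s.image γ) (L e)
      omega
    obtain ⟨c, hc⟩ := hne
    rw [mem_sdiff] at hc
    refine ⟨Function.update γ e c, ?_, ?_⟩
    · intro f hf
      rcases mem_insert.mp hf with rfl | hf'
      · rw [Function.update_self]; exact hc.1
      · have hne' : f ≠ e := by rintro rfl; exact he hf'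
        rw [Function.update_of_ne hne']; exact hγ1 f hf'
    · intro f hf g hg hfg heq
      rcases mem_insert.mp hf with rfl | hf' <;> rcases mem_insert.mp hg with rfl | hg'
      · exact absurd rfl hfg
      · have hne' : g ≠ f := by rintro rfl; exact he hg'
        rw [Function.update_self, Function.update_of_ne hne'] at heq
        rw [heq] at hc
        exact absurd (mem_image_of_mem γ hg') hc.2
      · have hne' : f ≠ g := by rintro rfl; exact he hf'
        rw [Function.update_self, Function.update_of_ne hne'] at heq
        rw [← heq] at hc
        exact absurd (mem_image_of_mem γ hf') hc.2
      · have hnf : f ≠ e := by rintro rfl; exact he hf'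
        have hng : g ≠ e := by rintro rfl; exact he hg'
        rw [Function.update_of_ne hnf, Function.update_of_ne hng] at heq
        exact hγ2 f hf' g hg' hfg heq

theorem aux_apply (E : Finset (Finset V)) (t : ℕ) (h : ListColorable E t)
    (L : Finset V → Finset ℕ) (hL : ∀ e ∈ E, t ≤ (L e).card) :
    ∃ γ : Finset V → ℕ, IsProperListColoring E L γ := by
  have hex : ∀ e : Finset V, ∃ s : Finset ℕ, s ⊆ L e ∧ (e ∈ E → s.card = t) := by
    intro e
    by_cases he : e ∈ E
    · obtain ⟨s, hs, hcard⟩ := Finset.exists_subset_card_eq (hL e he)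
      exact ⟨s, hs, fun _ => hcard⟩
    · exact ⟨∅, empty_subset _, fun h' => absurd h' he⟩
  choose S hS hScard using hex
  obtain ⟨γ, h1, hprop⟩ := h S (fun e he => hScard e he)
  exact ⟨γ, fun e he => hS e (h1 e he), hprop⟩

/-- Assuming the weak Vizing list conjecture C4: if `H` is a linear hypergraph on `n`
vertices with no rank-1 edges and `H₃` (edges of rank ≥ 3) is regular of degree `d`,
then any list `n`-coloring of `H₃` extends to a list `n`-coloring of `H`. -/
theorem stmt13
    (C4 : ∀ (W : Type) [DecidableEq W] (G : Finset (Finset W)) (k : ℕ),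
      (∀ e ∈ G, e.card = 2) → (∀ x : W, deg G x ≤ k) → qList G ≤ k + 1)
    {V : Type} [DecidableEq V] [Fintype V] (E : Finset (Finset V)) (d : ℕ)
    (hlin : Linear E) (h2 : ∀ e ∈ E, 2 ≤ e.card)
    (hreg : ∀ x : V, deg (E.filter fun e => 3 ≤ e.card) x = d)
    (L : Finset V → Finset ℕ) (hL : ∀ e ∈ E, (L e).card = Fintype.card V)
    (γ3 : Finset V → ℕ)
    (hγ3 : IsProperListColoring (E.filter fun e => 3 ≤ e.card) L γ3) :
    ∃ γ : Finset V → ℕ, IsProperListColoring E L γ ∧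
      ∀ e ∈ E.filter (fun e => 3 ≤ e.card), γ e = γ3 e := by
  classical
  set n := Fintype.card V with hn
  by_cases hE2ne : E.filter (fun e => e.card = 2) = ∅
  · -- all edges have rank ≥ 3
    have hE : E.filter (fun e => 3 ≤ e.card) = E := by
      rw [Finset.filter_eq_self]
      intro e he
      by_contra hlt
      have : e ∈ E.filter (fun e => e.card = 2) :=
        mem_filter.mpr ⟨he, by have := h2 e he; omega⟩
      rw [hE2ne] at this
      exact absurd this (notMem_empty e)
    refine ⟨γ3, ?_, fun e _ => rfl⟩
    rw [← hE]
    exact hγ3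
  -- main case
  have hE2ne' : (E.filter (fun e => e.card = 2)).Nonempty := nonempty_iff_ne_empty.mpr hE2ne
  -- degree counting
  have hcount : ∀ x : V, 2 * d + deg (E.filter (fun e => e.card = 2)) x ≤ n - 1 := by
    intro x
    have hdisj : ∀ e ∈ E.filter (fun e => x ∈ e), ∀ f ∈ E.filter (fun e => x ∈ e),
        e ≠ f → Disjoint (e.erase x) (f.erase x) := by
      intro e he f hf hef
      rw [mem_filter] at he hf
      rw [Finset.disjoint_left]
      intro a ha hb
      rw [mem_erase] at ha hb
      have hsub : ({a, x} : Finset V) ⊆ e ∩ f := by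
        intro b hb'
        rcases mem_insert.mp hb' with rfl | hb'
        · exact mem_inter.mpr ⟨ha.2, hb.2⟩
        · rw [mem_singleton] at hb'
          subst hb'
          exact mem_inter.mpr ⟨he.2, hf.2⟩
      have hcard2 : ({a, x} : Finset V).card = 2 := by
        rw [card_insert_of_notMem (by simp [ha.1]), card_singleton]
      have := card_le_card hsub
      have := hlin e he.1 f hf.1 hef
      omega
    have hsum : ∑ e ∈ E.filter (fun e => x ∈ e), (e.erase x).card ≤ n - 1 := by
      rw [← Finset.card_biUnion hdisj]
      have hsub : (E.filter (fun e => x ∈ e)).biUnion (fun e => e.erase x)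
          ⊆ Finset.univ.erase x := by
        intro a ha
        rw [mem_biUnion] at ha
        obtain ⟨e, _, ha⟩ := ha
        exact mem_erase.mpr ⟨(mem_erase.mp ha).1, mem_univ a⟩
      calc ((E.filter (fun e => x ∈ e)).biUnion (fun e => e.erase x)).card
          ≤ (Finset.univ.erase x).card := card_le_card hsub
        _ = n - 1 := by rw [card_erase_of_mem (mem_univ x), Finset.card_univ]
    have hsplit : ∑ e ∈ (E.filter (fun e => x ∈ e)).filter (fun e => 3 ≤ e.card), (e.erase x).card
        + ∑ e ∈ (E.filter (fun e => x ∈ e)).filter (fun e => ¬ 3 ≤ e.card), (e.erase x).card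
        = ∑ e ∈ E.filter (fun e => x ∈ e), (e.erase x).card :=
      Finset.sum_filter_add_sum_filter_not _ _ _
    have hdF : ((E.filter (fun e => x ∈ e)).filter (fun e => 3 ≤ e.card)).card = d := by
      rw [← hreg x, deg, filter_filter, filter_filter]
      congr 1
      ext e
      simp only [mem_filter]
      tauto
    have h3sum : 2 * d
        ≤ ∑ e ∈ (E.filter (fun e => x ∈ e)).filter (fun e => 3 ≤ e.card), (e.erase x).card := by
      calc 2 * d = ∑ _e ∈ (E.filter (fun e => x ∈ e)).filter (fun e => 3 ≤ e.card), 2 := by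
            rw [Finset.sum_const, hdF, smul_eq_mul, mul_comm]
        _ ≤ _ := Finset.sum_le_sum (fun e he => by
            rw [mem_filter, mem_filter] at he
            rw [card_erase_of_mem he.1.2]
            omega)
    have h2sum : ∑ e ∈ (E.filter (fun e => x ∈ e)).filter (fun e => ¬ 3 ≤ e.card),
        (e.erase x).card = deg (E.filter (fun e => e.card = 2)) x := by
      have hset : (E.filter (fun e => x ∈ e)).filter (fun e => ¬ 3 ≤ e.card)
          = (E.filter (fun e => e.card = 2)).filter (fun e => x ∈ e) := by
        rw [filter_filter, filter_filter]
        ext e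
        simp only [mem_filter]
        constructor
        · rintro ⟨he, hx, hc⟩
          have := h2 e he
          exact ⟨he, by omega, hx⟩
        · rintro ⟨he, hc, hx⟩
          exact ⟨he, hx, by omega⟩
      rw [hset, deg, Finset.card_eq_sum_ones]
      refine Finset.sum_congr rfl fun e he => ?_
      rw [mem_filter, mem_filter] at he
      rw [card_erase_of_mem he.2]
      have := he.1.2
      omega
    omega
  -- E₂ nonempty gives 2d + 2 ≤ n
  obtain ⟨e₀, he₀⟩ := hE2ne'
  have he₀E := mem_filter.mp he₀
  obtain ⟨x₀, hx₀⟩ := card_pos.mp (by omega : 0 < e₀.card)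
  have hdeg1 : 1 ≤ deg (E.filter (fun e => e.card = 2)) x₀ := by
    rw [deg]
    exact card_pos.mpr ⟨e₀, mem_filter.mpr ⟨he₀, hx₀⟩⟩
  have hnd : 2 * d + 2 ≤ n := by
    have := hcount x₀
    have hnpos : 0 < n := by rw [hn]; exact Fintype.card_pos_iff.mpr ⟨x₀⟩
    omega
  -- forbidden colors
  have hForbCard : ∀ e ∈ E.filter (fun e => e.card = 2),
      (((E.filter (fun e => 3 ≤ e.card)).filter fun f => (e ∩ f).Nonempty).image γ3).card
        ≤ 2 * d := by
    intro e he
    rw [mem_filter] at he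
    have hsub : (E.filter (fun e => 3 ≤ e.card)).filter (fun f => (e ∩ f).Nonempty)
        ⊆ e.biUnion (fun x => (E.filter (fun e => 3 ≤ e.card)).filter (fun f => x ∈ f)) := by
      intro f hf
      rw [mem_filter] at hf
      obtain ⟨a, ha⟩ := hf.2
      rw [mem_inter] at ha
      exact mem_biUnion.mpr ⟨a, ha.1, mem_filter.mpr ⟨hf.1, ha.2⟩⟩
    calc (((E.filter (fun e => 3 ≤ e.card)).filter fun f => (e ∩ f).Nonempty).image γ3).card
        ≤ ((E.filter (fun e => 3 ≤ e.card)).filter fun f => (e ∩ f).Nonempty).card :=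
          card_image_le
      _ ≤ (e.biUnion (fun x => (E.filter (fun e => 3 ≤ e.card)).filter (fun f => x ∈ f))).card :=
          card_le_card hsub
      _ ≤ ∑ x ∈ e, ((E.filter (fun e => 3 ≤ e.card)).filter (fun f => x ∈ f)).card :=
          card_biUnion_le
      _ = ∑ _x ∈ e, d := Finset.sum_congr rfl (fun x _ => hreg x)
      _ = 2 * d := by rw [Finset.sum_const, he.2, smul_eq_mul, mul_comm]
  have hL'card : ∀ e ∈ E.filter (fun e => e.card = 2), n - 2 * d
      ≤ (L e \ ((E.filter (fun e => 3 ≤ e.card)).filter fun f => (e ∩ f).Nonempty).image γ3).card := by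
    intro e he
    have h1 := hForbCard e he
    have h2' : (L e).card = n := hL e (mem_filter.mp he).1
    have h3' := Finset.le_card_sdiff
      (((E.filter (fun e => 3 ≤ e.card)).filter fun f => (e ∩ f).Nonempty).image γ3) (L e)
    omega
  -- apply C4
  have hq : qList (E.filter (fun e => e.card = 2)) ≤ n - 2 * d := by
    have := C4 V (E.filter (fun e => e.card = 2)) (n - 1 - 2 * d)
      (fun e he => (mem_filter.mp he).2)
      (fun x => by have := hcount x; omega)
    omega
  have hsne : {k | ListColorable (E.filter (fun e => e.card = 2)) k}.Nonempty :=
    ⟨(E.filter (fun e => e.card = 2)).card, fun L'' hL'' =>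
      aux_greedy _ L'' (fun e he => le_of_eq (hL'' e he).symm)⟩
  have hmem : ListColorable (E.filter (fun e => e.card = 2))
      (qList (E.filter (fun e => e.card = 2))) := Nat.sInf_mem hsne
  have hcol := aux_apply (E.filter (fun e => e.card = 2))
    (qList (E.filter (fun e => e.card = 2))) hmem
    (fun e => L e \ ((E.filter (fun e => 3 ≤ e.card)).filter fun f => (e ∩ f).Nonempty).image γ3)
    (fun e he => by
      show qList (E.filter (fun e => e.card = 2)) ≤ (L e \ ((E.filter (fun e => 3 ≤ e.card)).filter fun f => (e ∩ f).Nonempty).image γ3).card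
      exact le_trans hq (hL'card e he))
  obtain ⟨γ2, hγ2mem, hγ2prop⟩ := hcol
  -- combine
  refine ⟨fun e => if 3 ≤ e.card then γ3 e else γ2 e, ⟨?_, ?_⟩, ?_⟩
  · intro e he
    by_cases h3e : 3 ≤ e.card
    · simp only [if_pos h3e]
      exact hγ3.1 e (mem_filter.mpr ⟨he, h3e⟩)
    · have he2 : e ∈ E.filter (fun e => e.card = 2) :=
        mem_filter.mpr ⟨he, by have := h2 e he; omega⟩
      simp only [if_neg h3e]
      exact (mem_sdiff.mp (hγ2mem e he2)).1
  · intro e he f hf hef heq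
    simp only at heq
    by_cases h3e : 3 ≤ e.card <;> by_cases h3f : 3 ≤ f.card
    · rw [if_pos h3e, if_pos h3f] at heq
      exact hγ3.2 e (mem_filter.mpr ⟨he, h3e⟩) f (mem_filter.mpr ⟨hf, h3f⟩) hef heq
    · rw [if_pos h3e, if_neg h3f] at heq
      have hf2 : f ∈ E.filter (fun e => e.card = 2) :=
        mem_filter.mpr ⟨hf, by have := h2 f hf; omega⟩
      by_contra hnd'
      have hint : (f ∩ e).Nonempty := by
        rw [← Finset.not_disjoint_iff_nonempty_inter]
        exact fun h => hnd' h.symm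
      have hmem' : γ3 e ∈ ((E.filter (fun e => 3 ≤ e.card)).filter
          fun g => (f ∩ g).Nonempty).image γ3 :=
        mem_image.mpr ⟨e, mem_filter.mpr ⟨mem_filter.mpr ⟨he, h3e⟩, hint⟩, rfl⟩
      rw [heq] at hmem'
      exact (mem_sdiff.mp (hγ2mem f hf2)).2 hmem'
    · rw [if_neg h3e, if_pos h3f] at heq
      have he2 : e ∈ E.filter (fun e => e.card = 2) :=
        mem_filter.mpr ⟨he, by have := h2 e he; omega⟩
      by_contra hnd'
      have hint : (e ∩ f).Nonempty := Finset.not_disjoint_iff_nonempty_inter.mp hnd'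
      have hmem' : γ3 f ∈ ((E.filter (fun e => 3 ≤ e.card)).filter
          fun g => (e ∩ g).Nonempty).image γ3 :=
        mem_image.mpr ⟨f, mem_filter.mpr ⟨mem_filter.mpr ⟨hf, h3f⟩, hint⟩, rfl⟩
      rw [← heq] at hmem'
      exact (mem_sdiff.mp (hγ2mem e he2)).2 hmem'
    · rw [if_neg h3e, if_neg h3f] at heq
      have he2 : e ∈ E.filter (fun e => e.card = 2) :=
        mem_filter.mpr ⟨he, by have := h2 e he; omega⟩
      have hf2 : f ∈ E.filter (fun e => e.card = 2) :=
        mem_filter.mpr ⟨hf, by have := h2 f hf; omega⟩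
      exact hγ2prop e he2 f hf2 hef heq
  · intro e he
    simp only
    rw [if_pos (mem_filter.mp he).2]
end

section
/- Assume Conjecture C4 holds. Let H be a linear hypergraph with n vertices and no rank-1 edges, let Δ be the maximum degree of H_3, let d(x) be the degree of x in H_3, and let d_k(x) be the number of edges of rank k containing x. If for every vertex x the excess Σ_{k ≥ 4} (k − 3) d_k(x) is at least twice the deficit Δ − d(x), then for any assignment of lists of size n to all edges of H, every list edge coloring of H_3 from these lists can be extended to a list edge coloring of H from these lists. -/
open Finset

variable {V : Type*} [DecidableEq V]

lemma greedy_colorable (G : Finset (Finset V)) (L : Finset V → Finset ℕ)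
    (hL : ∀ e ∈ G, G.card ≤ (L e).card) : ∃ γ, IsProperListColoring G L γ := by
  classical
  induction G using Finset.induction_on with
  | empty =>
      exact ⟨fun _ => 0, fun e he => absurd he (Finset.notMem_empty e),
        fun e he => absurd he (Finset.notMem_empty e)⟩
  | @insert a s ha ih =>
      have hcard : (insert a s).card = s.card + 1 := Finset.card_insert_of_notMem ha
      obtain ⟨γ, hmem, hprop⟩ := ih (fun e he => by
        have := hL e (Finset.mem_insert_of_mem he); omega)
      have himg : ¬ (L a ⊆ s.image γ) := by
        intro hsub
        have h1 := Finset.card_le_card hsub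
        have h2 := Finset.card_image_le (s := s) (f := γ)
        have h3 := hL a (Finset.mem_insert_self a s)
        omega
      obtain ⟨c, hcL, hcn⟩ := Finset.not_subset.mp himg
      refine ⟨Function.update γ a c, ?_, ?_⟩
      · intro e he
        rcases Finset.mem_insert.mp he with rfl | hes
        · simpa using hcL
        · rw [Function.update_of_ne (by rintro rfl; exact ha hes)]
          exact hmem e hes
      · intro e he f hf hef heq
        rcases Finset.mem_insert.mp he with rfl | hes <;>
          rcases Finset.mem_insert.mp hf with rfl | hfs
        · exact absurd rfl hef
        · exfalso
          rw [Function.update_self, Function.update_of_ne (by rintro rfl; exact ha hfs)] at heq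
          exact hcn (Finset.mem_image.mpr ⟨f, hfs, heq.symm⟩)
        · exfalso
          rw [Function.update_self, Function.update_of_ne (by rintro rfl; exact ha hes)] at heq
          exact hcn (Finset.mem_image.mpr ⟨e, hes, heq⟩)
        · rw [Function.update_of_ne (by rintro rfl; exact ha hes),
            Function.update_of_ne (by rintro rfl; exact ha hfs)] at heq
          exact hprop e hes f hfs hef heq

lemma exists_coloring_of_qList_le (G : Finset (Finset V)) (m : ℕ) (h : qList G ≤ m)
    (L : Finset V → Finset ℕ) (hL : ∀ e ∈ G, m ≤ (L e).card) :
    ∃ γ, IsProperListColoring G L γ := by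
  classical
  have hne : ListColorable G G.card := fun L' hL' =>
    greedy_colorable G L' (fun e he => (hL' e he).ge)
  have hmem : ListColorable G (qList G) := Nat.sInf_mem (⟨G.card, hne⟩ : {k | ListColorable G k}.Nonempty)
  have hq : ∀ e ∈ G, qList G ≤ (L e).card := fun e he => le_trans h (hL e he)
  have hch : ∀ e : Finset V, ∃ t : Finset ℕ, t ⊆ L e ∧ (e ∈ G → t.card = qList G) := by
    intro e
    by_cases he : e ∈ G
    · obtain ⟨t, ht, hc⟩ := Finset.exists_subset_card_eq (hq e he)
      exact ⟨t, ht, fun _ => hc⟩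
    · exact ⟨∅, Finset.empty_subset _, fun h' => absurd h' he⟩
  choose T hT1 hT2 using hch
  obtain ⟨γ, h1, h2⟩ := hmem T (fun e he => hT2 e he)
  exact ⟨γ, fun e he => hT1 e (h1 e he), h2⟩

lemma cliqueDeg_le [Fintype V] (E : Finset (Finset V)) (hlin : Linear E) (x : V) :
    ∑ e ∈ E.filter (fun e => x ∈ e), (e.card - 1) ≤ Fintype.card V - 1 := by
  classical
  set S := E.filter (fun e => x ∈ e) with hS
  have hx : ∀ e ∈ S, x ∈ e := fun e he => (Finset.mem_filter.mp he).2
  have hdisj : ∀ e ∈ S, ∀ f ∈ S, e ≠ f → Disjoint (e.erase x) (f.erase x) := by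
    intro e he f hf hef
    rw [Finset.disjoint_left]
    intro z hz1 hz2
    have hzx : z ≠ x := (Finset.mem_erase.mp hz1).1
    have hsub : ({z, x} : Finset V) ⊆ e ∩ f := by
      intro w hw
      rcases Finset.mem_insert.mp hw with rfl | hw
      · exact Finset.mem_inter.mpr ⟨Finset.mem_of_mem_erase hz1, Finset.mem_of_mem_erase hz2⟩
      · rw [Finset.mem_singleton.mp hw]
        exact Finset.mem_inter.mpr ⟨hx e he, hx f hf⟩
    have h2 : 2 ≤ (e ∩ f).card := by
      have := Finset.card_le_card hsub
      rwa [Finset.card_pair hzx] at this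
    have := hlin e (Finset.mem_filter.mp he).1 f (Finset.mem_filter.mp hf).1 hef
    omega
  calc ∑ e ∈ S, (e.card - 1) = ∑ e ∈ S, (e.erase x).card := by
        refine Finset.sum_congr rfl fun e he => ?_
        rw [Finset.card_erase_of_mem (hx e he)]
    _ = (S.biUnion (fun e => e.erase x)).card := (Finset.card_biUnion hdisj).symm
    _ ≤ (Finset.univ.erase x).card := by
        refine Finset.card_le_card ?_
        intro z hz
        obtain ⟨e, _, hz⟩ := Finset.mem_biUnion.mp hz
        exact Finset.mem_erase.mpr ⟨(Finset.mem_erase.mp hz).1, Finset.mem_univ z⟩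
    _ = Fintype.card V - 1 := by
        rw [Finset.card_erase_of_mem (Finset.mem_univ x), Finset.card_univ]
/-- Assuming the weak Vizing list conjecture C4: if `H` is a linear hypergraph on `n`
vertices with no rank-1 edges, `Δ` is the maximum degree of `H₃` (edges of rank ≥ 3),
and for every vertex the excess `∑_{k ≥ 4} (k - 3) d_k(x)` is at least twice the
deficit `Δ - d(x)` (degree `d(x)` taken in `H₃`), then any list `n`-coloring of `H₃`
extends to a list `n`-coloring of `H`. -/
theorem stmt14
    (C4 : ∀ (W : Type) [DecidableEq W] (G : Finset (Finset W)) (k : ℕ),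
      (∀ e ∈ G, e.card = 2) → (∀ x : W, deg G x ≤ k) → qList G ≤ k + 1)
    {V : Type} [DecidableEq V] [Fintype V] (E : Finset (Finset V)) (Δ : ℕ)
    (hlin : Linear E) (h2 : ∀ e ∈ E, 2 ≤ e.card)
    (hΔ : Δ = Finset.univ.sup (deg (E.filter fun e => 3 ≤ e.card)))
    (hexcess : ∀ x : V,
      2 * (Δ - deg (E.filter fun e => 3 ≤ e.card) x) ≤
        ∑ k ∈ Finset.Icc 4 (E.sup Finset.card),
          (k - 3) * (E.filter fun e => x ∈ e ∧ e.card = k).card)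
    (L : Finset V → Finset ℕ) (hL : ∀ e ∈ E, (L e).card = Fintype.card V)
    (γ3 : Finset V → ℕ)
    (hγ3 : IsProperListColoring (E.filter fun e => 3 ≤ e.card) L γ3) :
    ∃ γ : Finset V → ℕ, IsProperListColoring E L γ ∧
      ∀ e ∈ E.filter (fun e => 3 ≤ e.card), γ e = γ3 e := by
  classical
  by_cases hV : IsEmpty V
  · have hE : ∀ e, e ∉ E := by
      intro e he
      have he0 : e = ∅ := Finset.eq_empty_of_isEmpty e
      have := h2 e he
      simp [he0] at this
    exact ⟨γ3, ⟨fun e he => absurd he (hE e), fun e he => absurd he (hE e)⟩,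
      fun e _ => rfl⟩
  have hVne : Nonempty V := not_isEmpty_iff.mp hV
  set n := Fintype.card V with hn
  set H3 := E.filter (fun e => 3 ≤ e.card) with hH3
  set H2 := E.filter (fun e => e.card = 2) with hH2
  have hΔle : ∀ x : V, deg H3 x ≤ Δ := fun x => hΔ ▸ Finset.le_sup (Finset.mem_univ x)
  -- key per-vertex bound
  have key : ∀ x : V, deg H2 x + 2 * Δ + 1 ≤ n := by
    intro x
    have hn1 : 1 ≤ n := Fintype.card_pos
    have htot : ∑ e ∈ E.filter (fun e => x ∈ e), (e.card - 1) ≤ n - 1 := cliqueDeg_le E hlin x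
    set S := E.filter (fun e => x ∈ e) with hSdef
    set S2 := S.filter (fun e => e.card = 2) with hS2
    set T := S.filter (fun e => ¬ e.card = 2) with hT
    have hsplit : ∑ e ∈ S, (e.card - 1)
        = ∑ e ∈ S2, (e.card - 1) + ∑ e ∈ T, (e.card - 1) :=
      (Finset.sum_filter_add_sum_filter_not S _ _).symm
    have hS2sum : ∑ e ∈ S2, (e.card - 1) = S2.card := by
      have hc : ∀ e ∈ S2, e.card - 1 = 1 := by
        intro e he
        have : e.card = 2 := (Finset.mem_filter.mp he).2
        omega
      rw [Finset.sum_congr rfl hc]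
      simp
    have hT3 : ∀ e ∈ T, 3 ≤ e.card := by
      intro e he
      have h1 := (Finset.mem_filter.mp he).2
      have h2' := h2 e (Finset.mem_filter.mp (Finset.mem_filter.mp he).1).1
      omega
    have hTsum : ∑ e ∈ T, (e.card - 1) = 2 * T.card + ∑ e ∈ T, (e.card - 3) := by
      have hc : ∀ e ∈ T, e.card - 1 = 2 + (e.card - 3) := by
        intro e he
        have := hT3 e he
        omega
      rw [Finset.sum_congr rfl hc, Finset.sum_add_distrib, Finset.sum_const, smul_eq_mul]
      omega
    have hS2deg : S2.card = deg H2 x := by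
      unfold S2 S H2
      rw [deg, Finset.filter_filter, Finset.filter_filter]
      congr 1
      ext e
      simp [and_comm]
    have hTdeg : T.card = deg H3 x := by
      unfold T S H3
      rw [deg, Finset.filter_filter, Finset.filter_filter]
      congr 1
      ext e
      simp only [Finset.mem_filter]
      constructor
      · rintro ⟨he, hx, hc⟩
        exact ⟨he, by have := h2 e he; omega, hx⟩
      · rintro ⟨he, hc, hx⟩
        exact ⟨he, hx, by omega⟩
    have hexle : ∑ k ∈ Finset.Icc 4 (E.sup Finset.card),
        (k - 3) * (E.filter fun e => x ∈ e ∧ e.card = k).card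
        ≤ ∑ e ∈ T, (e.card - 3) := by
      have h1 : ∀ k ∈ Finset.Icc 4 (E.sup Finset.card),
          (k - 3) * (E.filter fun e => x ∈ e ∧ e.card = k).card
          = ∑ e ∈ E.filter (fun e => x ∈ e ∧ e.card = k), (e.card - 3) := by
        intro k _
        rw [Finset.sum_congr rfl (fun e he => by
          rw [(Finset.mem_filter.mp he).2.2]), Finset.sum_const, smul_eq_mul, mul_comm]
      rw [Finset.sum_congr rfl h1]
      have hdisjk : (↑(Finset.Icc 4 (E.sup Finset.card)) : Set ℕ).PairwiseDisjoint
          (fun k => E.filter (fun e => x ∈ e ∧ e.card = k)) := by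
        intro k _ l _ hkl
        simp only [Function.onFun]
        rw [Finset.disjoint_left]
        intro e he1 he2
        have := (Finset.mem_filter.mp he1).2.2
        have := (Finset.mem_filter.mp he2).2.2
        exact hkl (by omega)
      rw [← Finset.sum_biUnion hdisjk]
      apply Finset.sum_le_sum_of_subset
      intro e he
      obtain ⟨k, hk, he⟩ := Finset.mem_biUnion.mp he
      obtain ⟨heE, hxe, hck⟩ := Finset.mem_filter.mp he
      have hk4 : 4 ≤ k := (Finset.mem_Icc.mp hk).1
      refine Finset.mem_filter.mpr ⟨Finset.mem_filter.mpr ⟨heE, hxe⟩, by omega⟩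
    have hex := hexcess x
    have hd := hΔle x
    omega
  obtain ⟨x0⟩ := hVne
  have h2Δ : 2 * Δ + 1 ≤ n := by have := key x0; omega
  -- apply C4 to H2
  have hq : qList H2 ≤ n - 2 * Δ := by
    have hc4 := C4 V H2 (n - 1 - 2 * Δ)
      (fun e he => (Finset.mem_filter.mp he).2)
      (fun x => by have := key x; omega)
    omega
  -- residual lists
  set F : Finset V → Finset ℕ :=
    fun e => (H3.filter fun f => ¬ Disjoint e f).image γ3 with hF
  set L' : Finset V → Finset ℕ := fun e => L e \ F e with hL'
  have hFcard : ∀ e ∈ H2, (F e).card ≤ 2 * Δ := by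
    intro e he
    obtain ⟨heE, hec⟩ := Finset.mem_filter.mp he
    obtain ⟨x, y, hxy, rfl⟩ := Finset.card_eq_two.mp hec
    calc (F {x, y}).card ≤ (H3.filter fun f => ¬ Disjoint {x, y} f).card :=
          Finset.card_image_le
      _ ≤ ((H3.filter fun f => x ∈ f) ∪ (H3.filter fun f => y ∈ f)).card := by
          apply Finset.card_le_card
          intro f hf
          obtain ⟨hfH, hnd⟩ := Finset.mem_filter.mp hf
          obtain ⟨z, hz1, hz2⟩ := Finset.not_disjoint_iff.mp hnd
          rcases Finset.mem_insert.mp hz1 with rfl | hz1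
          · exact Finset.mem_union_left _ (Finset.mem_filter.mpr ⟨hfH, hz2⟩)
          · rw [Finset.mem_singleton.mp hz1] at hz2
            exact Finset.mem_union_right _ (Finset.mem_filter.mpr ⟨hfH, hz2⟩)
      _ ≤ deg H3 x + deg H3 y := Finset.card_union_le _ _
      _ ≤ 2 * Δ := by have := hΔle x; have := hΔle y; omega
  have hL'card : ∀ e ∈ H2, n - 2 * Δ ≤ (L' e).card := by
    intro e he
    have h1 : (L e).card = n := hL e (Finset.mem_filter.mp he).1
    have h2' := hFcard e he
    have h3 := Finset.le_card_sdiff (F e) (L e)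
    have h4 : (L' e).card = (L e \ F e).card := rfl
    omega
  obtain ⟨γ2, hγ2mem, hγ2prop⟩ := exists_coloring_of_qList_le H2 (n - 2 * Δ) hq L' hL'card
  -- combine
  refine ⟨fun e => if 3 ≤ e.card then γ3 e else γ2 e, ⟨?_, ?_⟩, ?_⟩
  · intro e he
    show (if 3 ≤ e.card then γ3 e else γ2 e) ∈ L e
    by_cases hc : 3 ≤ e.card
    · rw [if_pos hc]
      exact hγ3.1 e (Finset.mem_filter.mpr ⟨he, hc⟩)
    · rw [if_neg hc]
      have hc2 : e.card = 2 := by have := h2 e he; omega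
      have := hγ2mem e (Finset.mem_filter.mpr ⟨he, hc2⟩)
      exact (Finset.mem_sdiff.mp this).1
  · intro e he f hf hef heq'
    have heq : (if 3 ≤ e.card then γ3 e else γ2 e) = (if 3 ≤ f.card then γ3 f else γ2 f) := heq'
    by_cases hce : 3 ≤ e.card <;> by_cases hcf : 3 ≤ f.card
    · rw [if_pos hce, if_pos hcf] at heq
      exact hγ3.2 e (Finset.mem_filter.mpr ⟨he, hce⟩) f (Finset.mem_filter.mpr ⟨hf, hcf⟩) hef heq
    · rw [if_pos hce, if_neg hcf] at heq
      have hf2 : f ∈ H2 := Finset.mem_filter.mpr ⟨hf, by have := h2 f hf; omega⟩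
      by_contra hnd
      have hγ2f := hγ2mem f hf2
      apply (Finset.mem_sdiff.mp hγ2f).2
      apply Finset.mem_image.mpr
      exact ⟨e, Finset.mem_filter.mpr ⟨Finset.mem_filter.mpr ⟨he, hce⟩,
        fun hd => hnd (hd.symm)⟩, heq⟩
    · rw [if_neg hce, if_pos hcf] at heq
      have he2 : e ∈ H2 := Finset.mem_filter.mpr ⟨he, by have := h2 e he; omega⟩
      by_contra hnd
      have hγ2e := hγ2mem e he2
      apply (Finset.mem_sdiff.mp hγ2e).2
      apply Finset.mem_image.mpr
      exact ⟨f, Finset.mem_filter.mpr ⟨Finset.mem_filter.mpr ⟨hf, hcf⟩, hnd⟩, heq.symm⟩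
    · rw [if_neg hce, if_neg hcf] at heq
      exact hγ2prop e (Finset.mem_filter.mpr ⟨he, by have := h2 e he; omega⟩)
        f (Finset.mem_filter.mpr ⟨hf, by have := h2 f hf; omega⟩) hef heq
  · intro e he
    show (if 3 ≤ e.card then γ3 e else γ2 e) = γ3 e
    rw [if_pos (Finset.mem_filter.mp he).2]
end

section
/- Let H be an edge-minimal counterexample to Conjecture C2, that is, H is a linear hypergraph with no rank-1 edges satisfying q_list(H) > D(H) + 1, while every linear hypergraph with no rank-1 edges and strictly fewer edges H' satisfies q_list(H') ≤ D(H') + 1. Then for every edge e, D(H ∖ {e}) = D(H). -/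
/-!
Deleting an edge cannot increase any clique degree, so `D(H ∖ {e}) ≤ D(H)`. If the inequality
were strict, minimality would make `H ∖ {e}` list colorable from lists of size `D(H)`. Given lists
of size `D(H) + 1` for `H`, give `e` any color `c` from its list and delete `c` from the lists of
the edges meeting `e`; these still have at least `D(H)` colors, so `H ∖ {e}` can be colored from
them, and the result extends to `H`. Hence `q_list(H) ≤ D(H) + 1`, a contradiction.
-/

open Finset

variable {V : Type*} [DecidableEq V]

namespace ListColorable

theorem exists_isProperListColoring_of_le {V : Type*} {E : Finset (Finset V)} {k : ℕ}
    (h : ListColorable E k) (L : Finset V → Finset ℕ) (hL : ∀ f ∈ E, k ≤ (L f).card) :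
    ∃ γ, IsProperListColoring E L γ := by
  have hsub : ∀ f, ∃ t ⊆ L f, k ≤ (L f).card → t.card = k := fun f => by
    by_cases hf : k ≤ (L f).card
    · obtain ⟨t, ht, htk⟩ := exists_subset_card_eq hf
      exact ⟨t, ht, fun _ => htk⟩
    · exact ⟨∅, empty_subset _, fun h => absurd h hf⟩
  choose L' hL'L hL'k using hsub
  obtain ⟨γ, hγL', hγ⟩ := h L' fun f hf => hL'k f (hL f hf)
  exact ⟨γ, fun f hf => hL'L f (hγL' f hf), hγ⟩

theorem mono_s15 {V : Type*} {E : Finset (Finset V)} {k m : ℕ} (h : ListColorable E k) (hkm : k ≤ m) :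
    ListColorable E m :=
  fun L hL => h.exists_isProperListColoring_of_le L fun f hf => (hL f hf).symm ▸ hkm

theorem insert {E : Finset (Finset V)} {k : ℕ} (h : ListColorable E k) (e : Finset V) :
    ListColorable (insert e E) (k + 1) := by
  intro L hL
  obtain ⟨c, hc⟩ : (L e).Nonempty := card_pos.mp (by rw [hL e (mem_insert_self e E)]; omega)
  let S : Finset V → Finset ℕ := fun f => if Disjoint e f then L f else (L f).erase c
  have hS : ∀ f ∈ E, k ≤ (S f).card := fun f hf => by
    have hLf := hL f (mem_insert_of_mem hf)
    by_cases hef : Disjoint e f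
    · simp only [S, if_pos hef]; omega
    · simp only [S, if_neg hef]
      have := pred_card_le_card_erase (s := L f) (a := c)
      omega
  obtain ⟨γ, hγS, hγ⟩ := h.exists_isProperListColoring_of_le S hS
  have hγL : ∀ f ∈ E, γ f ∈ L f ∧ (γ f = c → Disjoint e f) := fun f hf => by
    have := hγS f hf
    by_cases hef : Disjoint e f
    · simp only [S, if_pos hef] at this
      exact ⟨this, fun _ => hef⟩
    · simp only [S, if_neg hef, mem_erase] at this
      exact ⟨this.2, fun h => absurd h this.1⟩
  have hmem : ∀ f ∈ Insert.insert e E, f ≠ e → f ∈ E := fun f hf hfe =>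
    (mem_insert.mp hf).resolve_left hfe
  refine ⟨Function.update γ e c, fun f hf => ?_, fun f hf g hg hfg hfgc => ?_⟩
  · by_cases hfe : f = e
    · subst hfe; simpa using hc
    · simpa [hfe] using (hγL f (hmem f hf hfe)).1
  · by_cases hfe : f = e <;> by_cases hge : g = e
    · exact absurd (hfe.trans hge.symm) hfg
    · subst hfe
      simp only [Function.update_self, Function.update_of_ne hge] at hfgc
      exact (hγL g (hmem g hg hge)).2 hfgc.symm
    · subst hge
      simp only [Function.update_self, Function.update_of_ne hfe] at hfgc
      exact ((hγL f (hmem f hf hfe)).2 hfgc).symm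
    · simp only [Function.update_of_ne hfe, Function.update_of_ne hge] at hfgc
      exact hγ f (hmem f hf hfe) g (hmem g hg hge) hfg hfgc

end ListColorable

theorem listColorable_qList (E : Finset (Finset V)) : ListColorable E (qList E) :=
  Nat.sInf_mem (s := {k | ListColorable E k}) ⟨E.card, listColorable_card E⟩

theorem Linear.mono_s15 {E E' : Finset (Finset V)} (h : Linear E) (hE' : E' ⊆ E) : Linear E' :=
  fun e he f hf => h e (hE' he) f (hE' hf)

theorem cliqueDeg_erase_le (E : Finset (Finset V)) (e : Finset V) (x : V) :
    cliqueDeg (E.erase e) x ≤ cliqueDeg E x :=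
  sum_le_sum_of_subset (filter_subset_filter _ (erase_subset e E))

/-- An edge-minimal counterexample `H` to Conjecture C2 satisfies
`D(H \ {e}) = D(H)` for every edge `e`. -/
theorem stmt15 {V : Type*} [DecidableEq V] [Fintype V] (E : Finset (Finset V))
    (hlin : Linear E) (h2 : ∀ e ∈ E, 2 ≤ e.card)
    (hcex : Finset.univ.sup (cliqueDeg E) + 1 < qList E)
    (hmin : ∀ E' : Finset (Finset V), Linear E' → (∀ e ∈ E', 2 ≤ e.card) →
      E'.card < E.card → qList E' ≤ Finset.univ.sup (cliqueDeg E') + 1) :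
    ∀ e ∈ E, Finset.univ.sup (cliqueDeg (E.erase e)) =
      Finset.univ.sup (cliqueDeg E) := by
  intro e he
  refine le_antisymm (sup_mono_fun fun x _ => cliqueDeg_erase_le E e x) (not_lt.mp fun hlt => ?_)
  have hq : qList (E.erase e) ≤ univ.sup (cliqueDeg (E.erase e)) + 1 :=
    hmin _ (hlin.mono_s15 (erase_subset e E)) (fun f hf => h2 f (mem_of_mem_erase hf))
      (card_erase_lt_of_mem he)
  have hcol' : ListColorable (E.erase e) (univ.sup (cliqueDeg E)) :=
    (listColorable_qList _).mono_s15 (by omega)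
  have hcol : ListColorable E (univ.sup (cliqueDeg E) + 1) := by
    simpa only [insert_erase he] using hcol'.insert e
  exact hcex.not_ge (Nat.sInf_le hcol)
end

section
/- Let H be an edge-minimal counterexample to Conjecture C2, that is, H is a linear hypergraph with no rank-1 edges satisfying q_list(H) > D(H) + 1, while every linear hypergraph with no rank-1 edges and strictly fewer edges H' satisfies q_list(H') ≤ D(H') + 1. Then for every edge e, q_list(H ∖ {e}) = D(H) + 1. -/
open Finset

variable {V : Type*} [DecidableEq V]

/-!
Deleting an edge does not increase any clique degree, so minimality gives
`q_list(H ∖ {e}) ≤ D(H) + 1`. Conversely `q_list(H) ≤ q_list(H ∖ {e}) + 1`: fix a colour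
`c ∈ L_e`, colour `H ∖ {e}` from the lists `L_f ∖ {c}`, and give `e` the colour `c`.
Hence `q_list(H ∖ {e}) ≤ D(H)` would contradict `q_list(H) > D(H) + 1`.
-/

theorem Linear.subset {E E' : Finset (Finset V)} (hE : Linear E) (h : E' ⊆ E) : Linear E' :=
  fun e he f hf hef => hE e (h he) f (h hf) hef

theorem cliqueDeg_mono {E E' : Finset (Finset V)} (h : E' ⊆ E) (x : V) :
    cliqueDeg E' x ≤ cliqueDeg E x :=
  sum_le_sum_of_subset (filter_subset_filter _ h)

theorem IsProperListColoring.update {E : Finset (Finset V)} {L : Finset V → Finset ℕ}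
    {γ : Finset V → ℕ} {e : Finset V} {c : ℕ} (hγ : IsProperListColoring (E.erase e) L γ)
    (hc : c ∈ L e) (hfresh : ∀ f ∈ E.erase e, γ f ≠ c) :
    IsProperListColoring E L (Function.update γ e c) := by
  refine ⟨fun f hf => ?_, fun f hf g hg hfg hcol => ?_⟩
  · rcases eq_or_ne f e with rfl | hfe
    · simpa using hc
    · simpa [hfe] using hγ.1 f (mem_erase.2 ⟨hfe, hf⟩)
  · rcases eq_or_ne f e with rfl | hfe
    · simp only [Function.update_self, Function.update_of_ne hfg.symm] at hcol
      exact absurd hcol.symm (hfresh g (mem_erase.2 ⟨hfg.symm, hg⟩))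
    rcases eq_or_ne g e with rfl | hge
    · simp only [Function.update_self, Function.update_of_ne hfe] at hcol
      exact absurd hcol (hfresh f (mem_erase.2 ⟨hfe, hf⟩))
    simp only [Function.update_of_ne hfe, Function.update_of_ne hge] at hcol
    exact hγ.2 f (mem_erase.2 ⟨hfe, hf⟩) g (mem_erase.2 ⟨hge, hg⟩) hfg hcol

theorem ListColorable.exists_coloring {E : Finset (Finset V)} {k : ℕ} (h : ListColorable E k)
    {L : Finset V → Finset ℕ} (hL : ∀ e ∈ E, k ≤ (L e).card) :
    ∃ γ, IsProperListColoring E L γ := by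
  have hsub : ∀ e, ∃ t ⊆ L e, e ∈ E → t.card = k := fun e => by
    by_cases he : e ∈ E
    · obtain ⟨t, ht, htk⟩ := exists_subset_card_eq (hL e he)
      exact ⟨t, ht, fun _ => htk⟩
    · exact ⟨∅, empty_subset _, fun h => absurd h he⟩
  choose L' hL'L hL'k using hsub
  obtain ⟨γ, hγL', hγ⟩ := h L' hL'k
  exact ⟨γ, fun e he => hL'L e (hγL' e he), hγ⟩

theorem ListColorable.mono_s16 {E : Finset (Finset V)} {k m : ℕ} (h : ListColorable E k)
    (hkm : k ≤ m) : ListColorable E m :=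
  fun _ hL => h.exists_coloring fun e he => (hL e he).symm ▸ hkm

theorem ListColorable.of_erase {E : Finset (Finset V)} {e : Finset V} (he : e ∈ E) {k : ℕ}
    (h : ListColorable (E.erase e) k) : ListColorable E (k + 1) := by
  intro L hL
  obtain ⟨c, hc⟩ : (L e).Nonempty := card_pos.1 (by rw [hL e he]; omega)
  obtain ⟨γ, hγL, hγ⟩ := h.exists_coloring (L := fun f => (L f).erase c) fun f hf => by
    have := pred_card_le_card_erase (s := L f) (a := c)
    rw [hL f (mem_of_mem_erase hf)] at this
    omega
  exact ⟨_, IsProperListColoring.update ⟨fun f hf => mem_of_mem_erase (hγL f hf), hγ⟩ hc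
    fun f hf => ne_of_mem_erase (hγL f hf)⟩

theorem listColorable_iff_qList_le {E : Finset (Finset V)} {k : ℕ} :
    ListColorable E k ↔ qList E ≤ k :=
  ⟨fun h => Nat.sInf_le h, (listColorable_qList E).mono_s16⟩

theorem qList_le_qList_erase_add_one {E : Finset (Finset V)} {e : Finset V} (he : e ∈ E) :
    qList E ≤ qList (E.erase e) + 1 :=
  listColorable_iff_qList_le.1 ((listColorable_qList _).of_erase he)

/-- An edge-minimal counterexample `H` to Conjecture C2 satisfies
`q_list(H \ {e}) = D(H) + 1` for every edge `e`. -/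
theorem stmt16 {V : Type*} [DecidableEq V] [Fintype V] (E : Finset (Finset V))
    (hlin : Linear E) (h2 : ∀ e ∈ E, 2 ≤ e.card)
    (hcex : Finset.univ.sup (cliqueDeg E) + 1 < qList E)
    (hmin : ∀ E' : Finset (Finset V), Linear E' → (∀ e ∈ E', 2 ≤ e.card) →
      E'.card < E.card → qList E' ≤ Finset.univ.sup (cliqueDeg E') + 1) :
    ∀ e ∈ E, qList (E.erase e) = Finset.univ.sup (cliqueDeg E) + 1 := by
  intro e he
  have hupper : qList (E.erase e) ≤ univ.sup (cliqueDeg E) + 1 := by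
    refine (hmin _ (hlin.subset (erase_subset e E)) (fun f hf => h2 f (mem_of_mem_erase hf))
      (card_erase_lt_of_mem he)).trans ?_
    gcongr with x
    exact cliqueDeg_mono (erase_subset e E) x
  have hlower := qList_le_qList_erase_add_one he
  omega
end

section
/- Let H be a linear uniform hypergraph in which every edge has rank r ≥ 3, every edge satisfies R(e) ≤ R for the clique rank, and every vertex satisfies d(x) ≤ R/r + 1. Then for every edge e, the number of triangles with side e satisfies T(e) ≤ (R²/2)(1/r + (r − 1)²/R). -/
/-!
Count the ordered pairs `(f, g)` of distinct edges that meet `e` and each other: there are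
`2 T(e)` of them. If `f` and `g` pass through a common vertex `x` of `e`, there are at most
`(d(x) - 1)²` choices, and `∑ (d(x) - 1)² ≤ (R/r) ∑ (d(x) - 1) ≤ R²/r` by the degree bound.
Otherwise, by linearity, `f` is determined by `g`, the vertex of `g \ e` where `f` meets `g` and
the vertex of `e \ g` where `f` meets `e`. Since `e` has at most `R` neighbours, each with
`r - 1` vertices outside `e` and missing `r - 1` vertices of `e`, there are at most `R (r - 1)²`
such pairs.
-/

open Finset

variable {V : Type*} [DecidableEq V]

theorem Finset.card_filter_offDiag_eq_two_mul {α : Type*} [DecidableEq α] (s : Finset α)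
    (P : α → α → Prop) [DecidableRel P] (hP : ∀ a b, P a b → P b a) :
    #(s.offDiag.filter fun q => P q.1 q.2) =
      2 * #((s.powersetCard 2).filter fun p => ∀ a ∈ p, ∀ b ∈ p, a ≠ b → P a b) := by
  set T := (s.powersetCard 2).filter fun p => ∀ a ∈ p, ∀ b ∈ p, a ≠ b → P a b
  have hmaps : ∀ q ∈ s.offDiag.filter (fun q => P q.1 q.2), ({q.1, q.2} : Finset α) ∈ T := by
    rintro ⟨a, b⟩ hq
    simp only [mem_filter, mem_offDiag] at hq
    obtain ⟨⟨ha, hb, hab⟩, hP_ab⟩ := hq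
    simp only [T, mem_filter, mem_powersetCard, insert_subset_iff, singleton_subset_iff,
      card_pair hab, mem_insert, mem_singleton]
    refine ⟨⟨⟨ha, hb⟩, trivial⟩, ?_⟩
    rintro x (rfl | rfl) y (rfl | rfl) hxy <;>
      first | exact absurd rfl hxy | exact hP_ab | exact hP _ _ hP_ab
  rw [card_eq_sum_card_fiberwise hmaps, mul_comm, ← smul_eq_mul, ← sum_const]
  refine sum_congr rfl fun p hp => ?_
  simp only [T, mem_filter, mem_powersetCard] at hp
  obtain ⟨⟨hps, hp2⟩, hpP⟩ := hp
  obtain ⟨a, b, hab, rfl⟩ := card_eq_two.mp hp2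
  have hfiber : (s.offDiag.filter fun q => P q.1 q.2).filter
      (fun q => ({q.1, q.2} : Finset α) = {a, b}) = {(a, b), (b, a)} := by
    ext ⟨x, y⟩
    simp only [mem_filter, mem_offDiag, mem_insert, mem_singleton, Prod.mk.injEq, ← coe_inj,
      coe_pair, Set.pair_eq_pair_iff]
    refine ⟨And.right, fun hxy => ⟨?_, hxy⟩⟩
    rcases hxy with ⟨rfl, rfl⟩ | ⟨rfl, rfl⟩
    · exact ⟨⟨hps (by simp), hps (by simp), hab⟩, hpP _ (by simp) _ (by simp) hab⟩
    · exact ⟨⟨hps (by simp), hps (by simp), hab.symm⟩, hpP _ (by simp) _ (by simp) hab.symm⟩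
  rw [hfiber, card_pair (by simp [hab])]

theorem Finset.sum_sq_le_mul_sum {ι R : Type*} [CommSemiring R] [PartialOrder R] [IsOrderedRing R]
    {s : Finset ι} {a : ι → R} {M : R} (h0 : ∀ i ∈ s, 0 ≤ a i) (hM : ∀ i ∈ s, a i ≤ M) :
    ∑ i ∈ s, a i ^ 2 ≤ M * ∑ i ∈ s, a i := by
  rw [mul_sum]
  exact sum_le_sum fun i hi => by
    rw [sq]; exact mul_le_mul_of_nonneg_right (hM i hi) (h0 i hi)

theorem Finset.card_sdiff_add_one_le {α : Type*} [DecidableEq α] {s t : Finset α}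
    (h : (s ∩ t).Nonempty) : #(s \ t) + 1 ≤ #s := by
  rw [← card_sdiff_add_card_inter s t]
  exact Nat.add_le_add_left (card_pos.mpr h) _

section Triangles

variable {E : Finset (Finset V)} {e : Finset V}

def otherEdgesAt (E : Finset (Finset V)) (e : Finset V) (x : V) : Finset (Finset V) :=
  (E.filter (x ∈ ·)).erase e

def neighbors (E : Finset (Finset V)) (e : Finset V) : Finset (Finset V) :=
  (E.erase e).filter fun f => (e ∩ f).Nonempty

def trianglePairs (E : Finset (Finset V)) (e : Finset V) : Finset (Finset V × Finset V) :=
  (neighbors E e).offDiag.filter fun q => (q.1 ∩ q.2).Nonempty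

theorem card_otherEdgesAt {x : V} (he : e ∈ E) (hx : x ∈ e) :
    #(otherEdgesAt E e x) = deg E x - 1 :=
  card_erase_of_mem (mem_filter.mpr ⟨he, hx⟩)

theorem card_neighbors_le_cliqueRank (he : e ∈ E) : #(neighbors E e) ≤ cliqueRank E e := by
  have hsub : neighbors E e ⊆ e.biUnion (otherEdgesAt E e) := by
    intro f hf
    obtain ⟨hfE, x, hx⟩ := mem_filter.mp hf
    rw [mem_inter] at hx
    exact mem_biUnion.mpr ⟨x, hx.1, mem_erase.mpr ⟨ne_of_mem_erase hfE,
      mem_filter.mpr ⟨mem_of_mem_erase hfE, hx.2⟩⟩⟩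
  calc #(neighbors E e) ≤ #(e.biUnion (otherEdgesAt E e)) := card_le_card hsub
    _ ≤ ∑ x ∈ e, #(otherEdgesAt E e x) := card_biUnion_le
    _ = cliqueRank E e := sum_congr rfl fun x hx => card_otherEdgesAt he hx

theorem numTriangles_eq_card_powersetCard_neighbors :
    numTriangles E e = #(((neighbors E e).powersetCard 2).filter
      fun p => ∀ f ∈ p, ∀ g ∈ p, f ≠ g → (f ∩ g).Nonempty) := by
  unfold numTriangles neighbors
  congr 1
  ext p
  simp only [mem_filter, mem_powersetCard, subset_iff, imp_and, forall_and]
  tauto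

theorem card_trianglePairs : #(trianglePairs E e) = 2 * numTriangles E e := by
  rw [numTriangles_eq_card_powersetCard_neighbors]
  exact card_filter_offDiag_eq_two_mul (neighbors E e) (fun f g => (f ∩ g).Nonempty)
    fun f g h => by rwa [inter_comm]

theorem card_trianglePairs_filter_meet_on_side_le_sum_sq (he : e ∈ E) :
    #((trianglePairs E e).filter fun q => ∃ x ∈ e, x ∈ q.1 ∧ x ∈ q.2) ≤
      ∑ x ∈ e, (deg E x - 1) ^ 2 := by
  have hsub : (trianglePairs E e).filter (fun q => ∃ x ∈ e, x ∈ q.1 ∧ x ∈ q.2) ⊆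
      e.biUnion fun x => otherEdgesAt E e x ×ˢ otherEdgesAt E e x := by
    rintro ⟨f, g⟩ hq
    simp only [trianglePairs, neighbors, mem_filter, mem_offDiag, mem_erase] at hq
    obtain ⟨⟨⟨⟨⟨hfe, hfE⟩, -⟩, ⟨⟨hge, hgE⟩, -⟩, -⟩, -⟩, x, hx, hxf, hxg⟩ := hq
    simp only [otherEdgesAt, mem_biUnion, mem_product, mem_erase, mem_filter]
    exact ⟨x, hx, ⟨hfe, hfE, hxf⟩, ⟨hge, hgE, hxg⟩⟩
  calc _ ≤ _ := card_le_card hsub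
    _ ≤ _ := card_biUnion_le
    _ = _ := sum_congr rfl fun x hx => by rw [card_product, card_otherEdgesAt he hx, sq]

theorem Linear.card_filter_mem_mem_le_one (hlin : Linear E) {y z : V} (hyz : y ≠ z) :
    #(E.filter fun f => y ∈ f ∧ z ∈ f) ≤ 1 := by
  refine card_le_one.mpr fun f hf f' hf' => ?_
  rw [mem_filter] at hf hf'
  by_contra hne
  have hsub : ({y, z} : Finset V) ⊆ f ∩ f' := by
    simp [insert_subset_iff, hf.2, hf'.2]
  have := (card_le_card hsub).trans (hlin f hf.1 f' hf'.1 hne)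
  rw [card_pair hyz] at this
  omega

theorem card_trianglePairs_filter_not_meet_on_side_le_sum (hlin : Linear E) :
    #((trianglePairs E e).filter fun q => ¬∃ x ∈ e, x ∈ q.1 ∧ x ∈ q.2) ≤
      ∑ g ∈ neighbors E e, #(g \ e) * #(e \ g) := by
  set C : V × V → Finset (Finset V) := fun zy => E.filter fun f => zy.2 ∈ f ∧ zy.1 ∈ f
  have hsub : (trianglePairs E e).filter (fun q => ¬∃ x ∈ e, x ∈ q.1 ∧ x ∈ q.2) ⊆
      (neighbors E e).biUnion fun g => ((g \ e) ×ˢ (e \ g)).biUnion fun zy => C zy ×ˢ {g} := by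
    rintro ⟨f, g⟩ hq
    simp only [trianglePairs, mem_filter, mem_offDiag] at hq
    obtain ⟨⟨⟨hf, hg, -⟩, z, hz⟩, hnot⟩ := hq
    obtain ⟨hfE, y, hy⟩ := mem_filter.mp hf
    rw [mem_inter] at hy hz
    simp only [C, mem_biUnion, mem_product, mem_sdiff, mem_singleton, mem_filter]
    exact ⟨g, hg, (z, y), ⟨⟨hz.2, fun hze => hnot ⟨z, hze, hz⟩⟩, hy.1,
      fun hyg => hnot ⟨y, hy.1, hy.2, hyg⟩⟩, ⟨mem_of_mem_erase hfE, hy.2, hz.1⟩, rfl⟩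
  have hC : ∀ g, ∀ zy ∈ (g \ e) ×ˢ (e \ g), #(C zy ×ˢ {g}) ≤ 1 := by
    rintro g ⟨z, y⟩ hzy
    simp only [mem_product, mem_sdiff] at hzy
    rw [card_product, card_singleton, mul_one]
    exact hlin.card_filter_mem_mem_le_one (y := y) (z := z) fun hyz => hzy.1.2 (hyz ▸ hzy.2.1)
  calc _ ≤ _ := card_le_card hsub
    _ ≤ _ := card_biUnion_le
    _ ≤ ∑ g ∈ neighbors E e, ∑ _zy ∈ (g \ e) ×ˢ (e \ g), 1 :=
        sum_le_sum fun g _ => card_biUnion_le.trans (sum_le_sum (hC g))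
    _ = _ := by simp only [sum_const, smul_eq_mul, mul_one, card_product]

theorem card_trianglePairs_filter_meet_on_side_le {r R : ℕ} (hR : cliqueRank E e ≤ R)
    (hdeg : ∀ x : V, (deg E x : ℝ) ≤ (R : ℝ) / r + 1) (he : e ∈ E) :
    (#((trianglePairs E e).filter fun q => ∃ x ∈ e, x ∈ q.1 ∧ x ∈ q.2) : ℝ) ≤ R / r * R := by
  have hdeg' : ∀ x, ((deg E x - 1 : ℕ) : ℝ) ≤ R / r := fun x => by
    rcases Nat.eq_zero_or_pos (deg E x) with h | h
    · rw [h, Nat.zero_sub, Nat.cast_zero]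
      positivity
    · rw [Nat.cast_sub h, Nat.cast_one]
      linarith [hdeg x]
  calc _ ≤ ∑ x ∈ e, ((deg E x - 1 : ℕ) : ℝ) ^ 2 := by
        exact_mod_cast card_trianglePairs_filter_meet_on_side_le_sum_sq he
    _ ≤ R / r * ∑ x ∈ e, ((deg E x - 1 : ℕ) : ℝ) :=
        sum_sq_le_mul_sum (fun _ _ => Nat.cast_nonneg _) fun x _ => hdeg' x
    _ ≤ R / r * R := by
        gcongr
        exact_mod_cast hR

theorem card_trianglePairs_filter_not_meet_on_side_le {r R : ℕ} (hunif : ∀ e ∈ E, e.card = r)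
    (hlin : Linear E) (hR : cliqueRank E e ≤ R) (he : e ∈ E) :
    (#((trianglePairs E e).filter fun q => ¬∃ x ∈ e, x ∈ q.1 ∧ x ∈ q.2) : ℝ) ≤
      R * ((r : ℝ) - 1) ^ 2 := by
  have hside : ∀ f ∈ E, ∀ g, (f ∩ g).Nonempty → (#(f \ g) : ℝ) ≤ r - 1 := fun f hf g h => by
    rw [le_sub_iff_add_le, ← hunif f hf]
    exact_mod_cast card_sdiff_add_one_le h
  calc _ ≤ ∑ g ∈ neighbors E e, (#(g \ e) : ℝ) * #(e \ g) := by
        exact_mod_cast card_trianglePairs_filter_not_meet_on_side_le_sum hlin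
    _ ≤ ∑ _g ∈ neighbors E e, ((r : ℝ) - 1) ^ 2 := sum_le_sum fun g hg => by
        obtain ⟨hgE, hmeet⟩ := mem_filter.mp hg
        have hge := hside g (mem_of_mem_erase hgE) e (by rwa [inter_comm])
        rw [sq]
        exact mul_le_mul hge (hside e he g hmeet) (Nat.cast_nonneg _)
          ((Nat.cast_nonneg _).trans hge)
    _ = #(neighbors E e) * ((r : ℝ) - 1) ^ 2 := by rw [sum_const, nsmul_eq_mul]
    _ ≤ R * ((r : ℝ) - 1) ^ 2 := by
        gcongr
        exact_mod_cast (card_neighbors_le_cliqueRank he).trans hR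

end Triangles

theorem stmt18_general {V : Type*} [DecidableEq V] (E : Finset (Finset V)) (r R : ℕ)
    (hunif : ∀ e ∈ E, e.card = r) (hlin : Linear E)
    (hR : ∀ e ∈ E, cliqueRank E e ≤ R)
    (hdeg : ∀ x : V, (deg E x : ℝ) ≤ (R : ℝ) / r + 1) :
    ∀ e ∈ E, (numTriangles E e : ℝ) ≤
      (R : ℝ) ^ 2 / 2 * (1 / r + ((r : ℝ) - 1) ^ 2 / R) := by
  intro e he
  have hsplit := card_filter_add_card_filter_not (s := trianglePairs E e)
    fun q => ∃ x ∈ e, x ∈ q.1 ∧ x ∈ q.2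
  rw [card_trianglePairs] at hsplit
  have hsame := card_trianglePairs_filter_meet_on_side_le (hR e he) hdeg he
  have hcross := card_trianglePairs_filter_not_meet_on_side_le hunif hlin (hR e he) he
  have hrhs : (R : ℝ) ^ 2 / 2 * (1 / r + ((r : ℝ) - 1) ^ 2 / R) =
      (R / r * R + R * ((r : ℝ) - 1) ^ 2) / 2 := by
    rcases eq_or_ne (R : ℝ) 0 with h | h
    · simp [h]
    · field_simp
  rw [hrhs]
  have hsplitℝ := congrArg (Nat.cast (R := ℝ)) hsplit
  push_cast at hsplitℝ
  linarith

/-- In a linear uniform hypergraph of rank `r ≥ 3` in which every edge has clique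
rank at most `R` and every vertex has degree at most `R/r + 1`, every edge `e`
satisfies `T(e) ≤ (R²/2)(1/r + (r - 1)²/R)`. -/
theorem stmt18 {V : Type*} [DecidableEq V] (E : Finset (Finset V)) (r R : ℕ)
    (hr : 3 ≤ r) (hunif : ∀ e ∈ E, e.card = r) (hlin : Linear E)
    (hR : ∀ e ∈ E, cliqueRank E e ≤ R)
    (hdeg : ∀ x : V, (deg E x : ℝ) ≤ (R : ℝ) / r + 1) :
    ∀ e ∈ E, (numTriangles E e : ℝ) ≤
      (R : ℝ) ^ 2 / 2 * (1 / r + ((r : ℝ) - 1) ^ 2 / R) :=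
  stmt18_general E r R hunif hlin hR hdeg
end
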